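/- arXiv:2301.13002 — 16 statements merged into one kernel-verified Lean document; each statement's English description precedes it below -/
import Mathlib

section
/- Let A be a complex Banach algebra with a right identity u, let B be a complex Banach algebra, and let θ, φ, γ be nonzero multiplicative linear functionals on B. If d ∈ Der_J(A ×_θ^{φ,γ} B), then the maps d_A : A → A, d_A(a) = π_A(d(a,0)), and d_B : B → B, d_B(b) = π_B(d(0,b)), are Jordan derivations on A and B respectively, and for all a ∈ A, b ∈ B one has d(a,b) = (d_A(a) + (2θ(b) − φ(b) − γ(b)) d_A(u) − (1/2)(φ(d_B(b)) + γ(d_B(b))) u, d_B(b)). Moreover (d_A, d_B) is the unique pair of Jordan derivations for which this formula holds for all a, b. -/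
/-- The ψ-product on `A × B` (Lau product multiplication):
`(a,b)·_ψ(x,y) = (a x + ψ(y) a + ψ(b) x, b y)`. -/
def lauMul {A B : Type*} [NonUnitalNonAssocSemiring A] [NonUnitalNonAssocSemiring B]
    [Module ℂ A] [Module ℂ B] (ψ : B →ₗ[ℂ] ℂ) (p q : A × B) : A × B :=
  (p.1 * q.1 + ψ q.2 • p.1 + ψ p.2 • q.1, p.2 * q.2)

/-- Theorem 2.2 (i): characterization of Jordan derivation-like maps on the Lau product:
`d_A` and `d_B` are Jordan derivations, the formula for `d(a,b)` holds, and `(d_A, d_B)`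
is the unique such pair. -/
theorem lau_jordan_characterization
    {A B : Type*}
    [NonUnitalNormedRing A] [NormedSpace ℂ A] [IsScalarTower ℂ A A] [SMulCommClass ℂ A A]
    [CompleteSpace A]
    [NonUnitalNormedRing B] [NormedSpace ℂ B] [IsScalarTower ℂ B B] [SMulCommClass ℂ B B]
    [CompleteSpace B]
    (u : A) (hu : ∀ a : A, a * u = a)
    (θ φ γ : B →ₗ[ℂ] ℂ)
    (hθmul : ∀ x y : B, θ (x * y) = θ x * θ y) (hθ0 : θ ≠ 0)
    (hφmul : ∀ x y : B, φ (x * y) = φ x * φ y) (hφ0 : φ ≠ 0)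
    (hγmul : ∀ x y : B, γ (x * y) = γ x * γ y) (hγ0 : γ ≠ 0)
    (d : A × B →ₗ[ℂ] A × B)
    (hd : ∀ (a : A) (b : B),
      d (lauMul θ (a, b) (a, b)) = lauMul φ (d (a, b)) (a, b) + lauMul γ (a, b) (d (a, b)))
    (dA : A → A) (hdA : ∀ a : A, dA a = (d (a, 0)).1)
    (dB : B → B) (hdB : ∀ b : B, dB b = (d (0, b)).2)
 :
    (∀ a : A, dA (a * a) = dA a * a + a * dA a) ∧
    (∀ b : B, dB (b * b) = dB b * b + b * dB b) ∧
    (∀ (a : A) (b : B),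
      d (a, b) = (dA a + (2 * θ b - φ b - γ b) • dA u
        - ((1 / 2 : ℂ) * (φ (dB b) + γ (dB b))) • u, dB b)) ∧
    (∀ (DA : A →ₗ[ℂ] A) (DB : B →ₗ[ℂ] B),
      (∀ a : A, DA (a * a) = DA a * a + a * DA a) →
      (∀ b : B, DB (b * b) = DB b * b + b * DB b) →
      (∀ (a : A) (b : B),
        d (a, b) = (DA a + (2 * θ b - φ b - γ b) • DA u
          - ((1 / 2 : ℂ) * (φ (DB b) + γ (DB b))) • u, DB b)) →
      (∀ a : A, DA a = dA a) ∧ (∀ b : B, DB b = dB b)) := by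
  have huu : u * u = u := hu u
  have hsplit : ∀ (a : A) (b : B), d (a, b) = d (a, 0) + d (0, b) := by
    intro a b
    rw [← map_add]
    norm_num
  have dadd : ∀ x y : A, d (x + y, 0) = d (x, 0) + d (y, 0) := by
    intro x y
    rw [← map_add]
    norm_num
  -- second component of the diagonal A-equation
  have hg2 : ∀ a : A, (d (a * a, 0)).2 = 0 := by
    intro a
    have h := congrArg Prod.snd (hd a 0)
    simpa [lauMul] using h
  have hgcross : ∀ x y : A, (d (x * y + y * x, 0)).2 = 0 := by
    intro x y
    have h := hg2 (x + y)
    have e : (x + y) * (x + y) = x * x + (x * y + y * x) + y * y := by noncomm_ring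
    rw [e, dadd, dadd] at h
    simpa [hg2 x, hg2 y] using h
  have hguA : ∀ a : A, (d (u * a, 0)).2 = 0 := by
    intro a
    have h := hgcross u (u * a)
    rw [show u * (u * a) + u * a * u = u * a + u * a by rw [← mul_assoc, huu, hu], dadd] at h
    have h2 : (2 : ℂ) • (d (u * a, 0)).2 = 0 := by
      rw [two_smul]
      simpa using h
    have h3 := smul_eq_zero.mp h2
    simpa using h3
  have hgA : ∀ a : A, (d (a, 0)).2 = 0 := by
    intro a
    have h := hgcross u a
    rw [hu a, dadd] at h
    simpa [hguA a] using h
  -- dA is a Jordan derivation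
  have hJA : ∀ a : A, dA (a * a) = dA a * a + a * dA a := by
    intro a
    have h := congrArg Prod.fst (hd a 0)
    simp only [lauMul, map_zero, zero_smul, add_zero, mul_zero, zero_mul, smul_zero,
      Prod.fst_add, hgA a] at h
    simp only [hdA]
    linear_combination (norm := module) h
  -- dB is a Jordan derivation
  have hJB : ∀ b : B, dB (b * b) = dB b * b + b * dB b := by
    intro b
    have h := congrArg Prod.snd (hd 0 b)
    simp only [lauMul, smul_zero, mul_zero, zero_mul, add_zero, zero_add, Prod.snd_add] at h
    simpa [hdB] using h
  have hB1 : ∀ b : B, (d (0, b * b)).1 = φ b • (d (0, b)).1 + γ b • (d (0, b)).1 := by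
    intro b
    have h := congrArg Prod.fst (hd 0 b)
    simpa [lauMul] using h
  have hDu0 : u * (d (u, 0)).1 = 0 := by
    have h := hJA u
    rw [huu] at h
    simp only [hdA] at h
    rw [hu ((d (u, 0)).1)] at h
    exact (left_eq_add.mp h)
  -- key identity from hd u b
  have hKey : ∀ b : B, (d (0, b)).1 + u * (d (0, b)).1
      = (2 * θ b - φ b - γ b) • (d (u, 0)).1
        - (φ ((d (0, b)).2) + γ ((d (0, b)).2)) • u := by
    intro b
    have h := congrArg Prod.fst (hd u b)
    simp only [lauMul, Prod.fst_add] at h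
    have harg : ((u * u + θ b • u + θ b • u : A), (b * b : B))
        = (((u, (0 : B)) + θ b • (u, (0 : B)) + θ b • (u, (0 : B))) + ((0 : A), b * b)) := by
      simp [huu, Prod.ext_iff]
    rw [harg, map_add, map_add, map_add, map_smul, hsplit u b] at h
    simp only [Prod.fst_add, Prod.snd_add, Prod.smul_fst, Prod.smul_snd, hgA u, zero_add,
      add_mul, mul_add, hu, hDu0, hB1 b, smul_add, map_zero, zero_smul, add_zero] at h
    linear_combination (norm := module) -h
  have hKey2 : ∀ b : B,
      u * (d (0, b)).1 = (-(1 / 2 : ℂ) * (φ ((d (0, b)).2) + γ ((d (0, b)).2))) • u := by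
    intro b
    have h := congrArg (fun x => u * x) (hKey b)
    simp only [mul_add, mul_sub, mul_smul_comm] at h
    rw [← mul_assoc, huu, hDu0] at h
    simp only [smul_zero, zero_sub] at h
    have h2 : (2 : ℂ) • (u * (d (0, b)).1)
        = -((φ ((d (0, b)).2) + γ ((d (0, b)).2)) • u) := by
      rw [two_smul]
      linear_combination (norm := module) h
    have h3 : u * (d (0, b)).1 = (2 : ℂ)⁻¹ • ((2 : ℂ) • (u * (d (0, b)).1)) := by
      rw [smul_smul]; norm_num
    rw [h3, h2]
    module
  -- the formula
  have hform : ∀ (a : A) (b : B),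
      d (a, b) = (dA a + (2 * θ b - φ b - γ b) • dA u
        - ((1 / 2 : ℂ) * (φ (dB b) + γ (dB b))) • u, dB b) := by
    intro a b
    have hY : (d (0, b)).1 = (2 * θ b - φ b - γ b) • (d (u, 0)).1
        - ((1 / 2 : ℂ) * (φ ((d (0, b)).2) + γ ((d (0, b)).2))) • u := by
      have h1 := hKey b
      rw [hKey2 b] at h1
      linear_combination (norm := module) h1
    rw [hsplit a b]
    refine Prod.ext ?_ ?_
    · simp only [Prod.fst_add, hdA, hdB, hY]
      module
    · simp only [Prod.snd_add, hgA a, hdB, zero_add]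
  refine ⟨hJA, hJB, hform, ?_⟩
  intro DA DB _ _ hF
  constructor
  · intro a
    have h := hF a 0
    simp only [map_zero, mul_zero, sub_zero, zero_sub, zero_smul, add_zero, smul_zero,
      zero_mul, zero_add, neg_zero, sub_self] at h
    rw [hdA, h]
  · intro b
    have h := hF 0 b
    rw [hdB, h]
end

section
/- Let A be a complex Banach algebra with a right identity u, let B be a complex Banach algebra, and let θ, φ, γ be nonzero multiplicative linear functionals on B. If d ∈ Der_J(A ×_θ^{φ,γ} B), with d_A(a) = π_A(d(a,0)) and d_B(b) = π_B(d(0,b)), then for all a ∈ A and b ∈ B one has (2θ(b) − φ(b) − γ(b)) (d_A(a) − d_A(u) a) = (1/2)(φ(d_B(b)) + γ(d_B(b))) (a − u a). -/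
/-- Theorem 2.2 (ii): for a Jordan derivation-like map on the Lau product,
`(2θ(b) − φ(b) − γ(b))(d_A(a) − d_A(u)a) = (1/2)(φ(d_B(b)) + γ(d_B(b)))(a − ua)`. -/
theorem lau_jordan_condition_ii
    {A B : Type*}
    [NonUnitalNormedRing A] [NormedSpace ℂ A] [IsScalarTower ℂ A A] [SMulCommClass ℂ A A]
    [CompleteSpace A]
    [NonUnitalNormedRing B] [NormedSpace ℂ B] [IsScalarTower ℂ B B] [SMulCommClass ℂ B B]
    [CompleteSpace B]
    (u : A) (hu : ∀ a : A, a * u = a)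
    (θ φ γ : B →ₗ[ℂ] ℂ)
    (hθmul : ∀ x y : B, θ (x * y) = θ x * θ y) (hθ0 : θ ≠ 0)
    (hφmul : ∀ x y : B, φ (x * y) = φ x * φ y) (hφ0 : φ ≠ 0)
    (hγmul : ∀ x y : B, γ (x * y) = γ x * γ y) (hγ0 : γ ≠ 0)
    (d : A × B →ₗ[ℂ] A × B)
    (hd : ∀ (a : A) (b : B),
      d (lauMul θ (a, b) (a, b)) = lauMul φ (d (a, b)) (a, b) + lauMul γ (a, b) (d (a, b)))
    (dA : A → A) (hdA : ∀ a : A, dA a = (d (a, 0)).1)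
    (dB : B → B) (hdB : ∀ b : B, dB b = (d (0, b)).2)
 :
    ∀ (a : A) (b : B),
      (2 * θ b - φ b - γ b) • (dA a - dA u * a) =
        ((1 / 2 : ℂ) * (φ (dB b) + γ (dB b))) • (a - u * a) := by
  intro a b
  rw [hdA, hdA, hdB]
  set K : ℂ := 2 * θ b - φ b - γ b with hK
  set t : A := (d (0, b)).1 with ht
  set c : ℂ := φ (d (0, b)).2 + γ (d (0, b)).2 with hc
  -- key mixed identity
  have E3 : ∀ a' : A, K • (d (a', 0)).1 = t * a' + a' * t + c • a' := by
    intro a'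
    have hsum : d (a', b) = d (a', 0) + d (0, b) := by
      rw [← map_add]
      congr 1
      simp
    have harg : lauMul θ (a', b) (a', b)
        = lauMul θ (a', (0:B)) (a', (0:B)) + lauMul θ ((0:A), b) ((0:A), b)
          + (2 * θ b) • ((a' : A), (0 : B)) := by
      simp only [lauMul, map_zero, zero_smul, add_zero, smul_zero, mul_zero, zero_mul,
        Prod.smul_mk, Prod.mk_add_mk, Prod.mk.injEq]
      constructor
      · module
      · simp
    have h := hd a' b
    rw [harg, map_add, map_add, map_smul, hd a' 0, hd 0 b] at h
    have h1 := congrArg Prod.fst h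
    simp only [lauMul, hsum, Prod.fst_add, Prod.snd_add, Prod.smul_fst, Prod.smul_snd,
      map_add, map_zero, zero_smul, add_zero, zero_add, smul_zero, mul_zero, zero_mul,
      add_mul, mul_add, smul_add] at h1
    linear_combination (norm := module) h1
  -- facts at u
  have hu0 := hd u 0
  simp only [lauMul, map_zero, zero_smul, add_zero, smul_zero, mul_zero, zero_mul, hu u,
    Prod.mk_add_mk] at hu0
  have hSu : (d (u, 0)).2 = 0 := by
    have := congrArg Prod.snd hu0
    simpa using this
  have hq : u * (d (u, 0)).1 = 0 := by
    have h1 := congrArg Prod.fst hu0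
    simp only [Prod.fst_add] at h1
    rw [hSu] at h1
    simp only [map_zero, zero_smul, add_zero, hu] at h1
    -- h1 : (d (u,0)).1 = (d (u,0)).1 + u * (d (u,0)).1  (roughly)
    linear_combination (norm := module) -h1
  set q : A := (d (u, 0)).1 with hqdef
  have E3u : K • q = t + u * t + c • u := by
    have h := E3 u
    rwa [hu t] at h
  have e4 : u * t + u * t + c • u = 0 := by
    have h := congrArg (fun z => u * z) E3u
    simp only [mul_add, mul_smul_comm, hq, smul_zero, ← mul_assoc, hu] at h
    linear_combination (norm := module) -h
  have e8 : a * t + a * t + c • a = 0 := by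
    have h := congrArg (fun z => a * z) e4
    simp only [mul_add, mul_smul_comm, ← mul_assoc, hu, mul_zero] at h
    linear_combination (norm := module) h
  have e6' : u * t * a + u * t * a + c • (u * a) = 0 := by
    have h := congrArg (fun z => z * a) e4
    simp only [add_mul, smul_mul_assoc, zero_mul] at h
    linear_combination (norm := module) h
  have eR : K • (q * a) = t * a + u * t * a + c • (u * a) := by
    have h := congrArg (fun z => z * a) E3u
    simp only [add_mul, smul_mul_assoc] at h
    linear_combination (norm := module) h
  have E3a := E3 a
  linear_combination (norm := module) E3a - eR + (1/2 : ℂ) • e8 - (1/2 : ℂ) • e6'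
end

section
/- Let A be a complex Banach algebra with a right identity u, let B be a complex Banach algebra, and let θ, φ, γ be nonzero multiplicative linear functionals on B. If d ∈ Der_J(A ×_θ^{φ,γ} B), with d_A(a) = π_A(d(a,0)) and d_B(b) = π_B(d(0,b)), then for all b ∈ B one has (θ(b) − φ(b))(θ(b) − γ(b)) d_A(u) = 0 and (γ(b) − φ(b))(γ(d_B(b)) − φ(d_B(b))) u = 0. -/
lemma exists_one_zero' {B : Type*} [NonUnitalNonAssocRing B] [Module ℂ B]
    (χ ψ : B →ₗ[ℂ] ℂ) (hχ : ∀ x y : B, χ (x * y) = χ x * χ y)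
    (hψ : ∀ x y : B, ψ (x * y) = ψ x * ψ y)
    (hχ0 : χ ≠ 0) (hne : χ ≠ ψ) : ∃ x : B, χ x = 1 ∧ ψ x = 0 := by
  obtain ⟨a, ha⟩ : ∃ a, χ a ≠ ψ a := by
    by_contra h
    push_neg at h
    exact hne (LinearMap.ext h)
  obtain ⟨w0, hw0⟩ : ∃ w, χ w ≠ 0 := by
    by_contra h
    push_neg at h
    exact hχ0 (LinearMap.ext fun x => by simpa using h x)
  set w := (χ w0)⁻¹ • w0 with hw
  have hχw : χ w = 1 := by
    simp [hw, smul_eq_mul, inv_mul_cancel₀ hw0]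
  refine ⟨(χ a - ψ a)⁻¹ • (a * w - (ψ a) • w), ?_, ?_⟩
  · have : χ (a * w - ψ a • w) = χ a - ψ a := by
      simp [map_sub, hχ, hχw, smul_eq_mul]
    simp [map_smul, this, smul_eq_mul, inv_mul_cancel₀ (sub_ne_zero.mpr ha)]
  · have : ψ (a * w - ψ a • w) = 0 := by
      simp [map_sub, hψ, smul_eq_mul]
    simp [map_smul, this]



/-- Theorem 2.2 (iii): for a Jordan derivation-like map on the Lau product,
`(θ(b) − φ(b))(θ(b) − γ(b)) d_A(u) = 0` and `(γ(b) − φ(b))(γ(d_B(b)) − φ(d_B(b))) u = 0`. -/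
theorem lau_jordan_condition_iii
    {A B : Type*}
    [NonUnitalNormedRing A] [NormedSpace ℂ A] [IsScalarTower ℂ A A] [SMulCommClass ℂ A A]
    [CompleteSpace A]
    [NonUnitalNormedRing B] [NormedSpace ℂ B] [IsScalarTower ℂ B B] [SMulCommClass ℂ B B]
    [CompleteSpace B]
    (u : A) (hu : ∀ a : A, a * u = a)
    (θ φ γ : B →ₗ[ℂ] ℂ)
    (hθmul : ∀ x y : B, θ (x * y) = θ x * θ y) (hθ0 : θ ≠ 0)
    (hφmul : ∀ x y : B, φ (x * y) = φ x * φ y) (hφ0 : φ ≠ 0)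
    (hγmul : ∀ x y : B, γ (x * y) = γ x * γ y) (hγ0 : γ ≠ 0)
    (d : A × B →ₗ[ℂ] A × B)
    (hd : ∀ (a : A) (b : B),
      d (lauMul θ (a, b) (a, b)) = lauMul φ (d (a, b)) (a, b) + lauMul γ (a, b) (d (a, b)))
    (dA : A → A) (hdA : ∀ a : A, dA a = (d (a, 0)).1)
    (dB : B → B) (hdB : ∀ b : B, dB b = (d (0, b)).2)
 :
    ∀ b : B,
      ((θ b - φ b) * (θ b - γ b)) • dA u = 0 ∧
      ((γ b - φ b) * (γ (dB b) - φ (dB b))) • u = 0 := by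
  -- the identity from `hd` at `(u, 0)`
  have hu0 : d (u, (0:B)) = lauMul φ (d (u, 0)) (u, 0) + lauMul γ (u, 0) (d (u, 0)) := by
    have h := hd u 0
    rw [show lauMul θ ((u:A), (0:B)) (u, 0) = (u, 0) by simp [lauMul, hu]] at h
    exact h
  -- second component of `d (u,0)` vanishes
  have hP2 : (d (u, (0:B))).2 = 0 := by
    have := congrArg Prod.snd hu0
    simpa [lauMul] using this
  -- `u * (d (u,0)).1 = 0`
  have hP1 : u * (d (u, (0:B))).1 = 0 := by
    have h := congrArg Prod.fst hu0
    simp [lauMul, hP2, hu] at h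
    exact h
  -- the identity from `hd` at `(0, b)`
  have hA : ∀ b : B, d ((0:A), b * b) = lauMul φ (d (0, b)) (0, b) + lauMul γ (0, b) (d (0, b)) := by
    intro b
    have h := hd 0 b
    rw [show lauMul θ ((0:A), b) (0, b) = (0, b * b) by simp [lauMul]] at h
    exact h
  have hA1 : ∀ b : B, (d ((0:A), b * b)).1 = φ b • (d (0, b)).1 + γ b • (d (0, b)).1 := by
    intro b
    have h := congrArg Prod.fst (hA b)
    simpa [lauMul] using h
  have hA2 : ∀ b : B, (d ((0:A), b * b)).2
      = (d (0, b)).2 * b + b * (d (0, b)).2 := by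
    intro b
    have h := congrArg Prod.snd (hA b)
    simpa [lauMul] using h
  -- the cross identity E_b
  have hE : ∀ b : B, (2 * θ b - φ b - γ b) • (d (u, (0:B))).1
      = (d ((0:A), b)).1 + u * (d ((0:A), b)).1
        + (φ (d ((0:A), b)).2 + γ (d ((0:A), b)).2) • u := by
    intro b
    have h := hd u b
    rw [show lauMul θ ((u:A), b) (u, b) = (1 + θ b + θ b) • ((u:A), (0:B)) + (0, b * b) by
      refine Prod.ext ?_ ?_ <;> simp [lauMul, hu] <;> module] at h
    rw [map_add, map_smul] at h
    have h1 := congrArg Prod.fst h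
    rw [show d ((u:A), b) = d (u, 0) + d (0, b) by
      rw [← map_add]; norm_num] at h1
    simp only [lauMul, Prod.fst_add, Prod.snd_add, Prod.smul_fst, Prod.smul_snd,
      Prod.fst_add, map_add, hP2, hA1 b] at h1
    simp only [add_mul, mul_add, hu, hP1, map_zero, zero_add, add_zero, smul_add] at h1
    linear_combination (norm := module) h1
  -- the key identity
  have hstar : ∀ b : B, (2 * (θ b - φ b) * (θ b - γ b)) • (d (u, (0:B))).1
      = ((φ b - γ b) * (φ (d ((0:A), b)).2 - γ (d ((0:A), b)).2)) • u := by
    intro b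
    have h1 := hE (b * b)
    rw [hθmul, hφmul, hγmul, hA1 b, hA2 b] at h1
    simp only [map_add, hφmul, hγmul, mul_add, mul_smul_comm] at h1
    have h2 := hE b
    linear_combination (norm := module) h1 - (φ b + γ b) • h2
  intro b
  rw [hdA, hdB]
  have hs2 : ((γ b - φ b) * (γ ((d ((0:A), b)).2) - φ ((d ((0:A), b)).2)))
      = ((φ b - γ b) * (φ ((d ((0:A), b)).2) - γ ((d ((0:A), b)).2))) := by ring
  by_cases hθφ : θ = φ
  · subst hθφ
    constructor
    · simp
    · rw [hs2, ← hstar b]; simp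
  by_cases hθγ : θ = γ
  · subst hθγ
    constructor
    · simp
    · rw [hs2, ← hstar b]; simp
  by_cases hφγ : φ = γ
  · subst hφγ
    have h := hstar b
    simp only [sub_self, mul_zero, zero_mul, zero_smul] at h
    constructor
    · have h2 : ((θ b - φ b) * (θ b - φ b)) • (d (u, (0:B))).1
          = (2⁻¹ : ℂ) • ((2 * (θ b - φ b) * (θ b - φ b)) • (d (u, (0:B))).1) := by
        rw [smul_smul]; congr 1; ring
      rw [h2, h, smul_zero]
    · simp
  · obtain ⟨x, hx1, hx2⟩ := exists_one_zero' θ φ hθmul hφmul hθ0 hθφ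
    obtain ⟨y, hy1, hy2⟩ := exists_one_zero' θ γ hθmul hγmul hθ0 hθγ
    have he := hstar (x * y)
    rw [hθmul, hφmul, hγmul, hx1, hy1, hx2, hy2] at he
    norm_num at he
    have hP : (d (u, (0:B))).1 = 0 := he
    constructor
    · rw [hP, smul_zero]
    · rw [hs2, ← hstar b, hP, smul_zero]
end

section
/- Let A be a complex Banach algebra with a right identity u, let B be a complex Banach algebra, and let θ, φ, γ be nonzero multiplicative linear functionals on B. Suppose d_A is a Jordan derivation on A and d_B is a Jordan derivation on B such that: (ii) (2θ(b) − φ(b) − γ(b))(d_A(a) − d_A(u)a) = (1/2)(φ(d_B(b)) + γ(d_B(b)))(a − u a) for all a ∈ A, b ∈ B, and (iii) (θ(b) − φ(b))(θ(b) − γ(b)) d_A(u) = 0 and (γ(b) − φ(b))(γ(d_B(b)) − φ(d_B(b))) u = 0 for all b ∈ B. Then the map d : A × B → A × B defined by d(a,b) = (d_A(a) + (2θ(b) − φ(b) − γ(b)) d_A(u) − (1/2)(φ(d_B(b)) + γ(d_B(b))) u, d_B(b)) belongs to Der_J(A ×_θ^{φ,γ} B). -/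
/-- Theorem 2.2, converse direction: given Jordan derivations `d_A`, `d_B` satisfying
conditions (ii) and (iii), the map defined by the formula is a Jordan derivation-like map
on the Lau product. -/
theorem lau_jordan_of_conditions
    {A B : Type*}
    [NonUnitalNormedRing A] [NormedSpace ℂ A] [IsScalarTower ℂ A A] [SMulCommClass ℂ A A]
    [CompleteSpace A]
    [NonUnitalNormedRing B] [NormedSpace ℂ B] [IsScalarTower ℂ B B] [SMulCommClass ℂ B B]
    [CompleteSpace B]
    (u : A) (hu : ∀ a : A, a * u = a)
    (θ φ γ : B →ₗ[ℂ] ℂ)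
    (hθmul : ∀ x y : B, θ (x * y) = θ x * θ y) (hθ0 : θ ≠ 0)
    (hφmul : ∀ x y : B, φ (x * y) = φ x * φ y) (hφ0 : φ ≠ 0)
    (hγmul : ∀ x y : B, γ (x * y) = γ x * γ y) (hγ0 : γ ≠ 0)
    (dA : A →ₗ[ℂ] A) (hJA : ∀ a : A, dA (a * a) = dA a * a + a * dA a)
    (dB : B →ₗ[ℂ] B) (hJB : ∀ b : B, dB (b * b) = dB b * b + b * dB b)
    (hii : ∀ (a : A) (b : B),
      (2 * θ b - φ b - γ b) • (dA a - dA u * a) =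
        ((1 / 2 : ℂ) * (φ (dB b) + γ (dB b))) • (a - u * a))
    (hiii : ∀ b : B,
      ((θ b - φ b) * (θ b - γ b)) • dA u = 0 ∧
      ((γ b - φ b) * (γ (dB b) - φ (dB b))) • u = 0)
    (d : A × B → A × B)
    (hdef : ∀ (a : A) (b : B),
      d (a, b) = (dA a + (2 * θ b - φ b - γ b) • dA u
        - ((1 / 2 : ℂ) * (φ (dB b) + γ (dB b))) • u, dB b)) :
    ∀ (a : A) (b : B),
      d (lauMul θ (a, b) (a, b)) = lauMul φ (d (a, b)) (a, b) + lauMul γ (a, b) (d (a, b)) := by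
  intro a b
  have F0 : u * dA u = 0 := by
    have h := hJA u
    rw [hu u, hu (dA u)] at h
    exact (left_eq_add.mp h)
  have E_a := hii a b
  have E_ua := hii (u * a) b
  rw [← mul_assoc, hu] at E_ua
  have huu : u * (u * a) = u * a := by rw [← mul_assoc, hu]
  rw [huu] at E_ua
  simp only [sub_self, smul_zero] at E_ua
  have Flu : (2 * θ b - φ b - γ b) • (u * dA a) = 0 := by
    have h := congrArg (fun z => u * z) (hii a b)
    simp only [mul_smul_comm, mul_sub, ← mul_assoc, F0, zero_mul, sub_zero, huu,
      sub_self, smul_zero] at h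
    exact h
  have FP : dA (u * a) = dA u * a + u * dA a + a * dA u := by
    have h := hJA (u + a)
    have e : (u + a) * (u + a) = u + (u * a + (a + a * a)) := by
      rw [add_mul, mul_add, mul_add, hu u, hu a]
      abel
    rw [e] at h
    simp only [map_add, add_mul, mul_add, hu, F0, add_zero, zero_add] at h
    linear_combination (norm := module) h - hJA a
  have Fkey : (2 * θ b - φ b - γ b) • (a * dA u) = 0 := by
    linear_combination (norm := module) E_ua - Flu - (2 * θ b - φ b - γ b) • FP
  have h3 := (hiii b).1
  have h4 := (hiii b).2
  show d (a * a + θ b • a + θ b • a, b * b) = _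
  rw [hdef, hdef]
  simp only [lauMul, Prod.mk_add_mk, Prod.mk.injEq]
  constructor
  · simp only [map_add, map_smul, hθmul, hφmul, hγmul, hJA, hJB, add_mul, sub_mul,
      mul_add, mul_sub, smul_mul_assoc, mul_smul_comm, hu]
    linear_combination (norm := module) E_a - Fkey + (2:ℂ) • h3 - (1/2 : ℂ) • h4
  · exact hJB b
end

section
/- Let A be a complex Banach algebra with a right identity u, let B be a complex Banach algebra, and let θ, φ, γ be nonzero multiplicative linear functionals on B. If d ∈ Der_J(A ×_θ^{φ,γ} B), then either θ = φ = γ (as functionals on B), or d maps A × {0} into ran(A) × {0}, i.e. for every a ∈ A, d(a,0) = (z,0) with x z = 0 for all x ∈ A. -/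
/-- Corollary 2.3 (i): either `θ = φ = γ`, or `d` maps `A × {0}` into `ran(A) × {0}`. -/
theorem lau_jordan_theta_eq_or_maps_into_ran
    {A B : Type*}
    [NonUnitalNormedRing A] [NormedSpace ℂ A] [IsScalarTower ℂ A A] [SMulCommClass ℂ A A]
    [CompleteSpace A]
    [NonUnitalNormedRing B] [NormedSpace ℂ B] [IsScalarTower ℂ B B] [SMulCommClass ℂ B B]
    [CompleteSpace B]
    (u : A) (hu : ∀ a : A, a * u = a)
    (θ φ γ : B →ₗ[ℂ] ℂ)
    (hθmul : ∀ x y : B, θ (x * y) = θ x * θ y) (hθ0 : θ ≠ 0)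
    (hφmul : ∀ x y : B, φ (x * y) = φ x * φ y) (hφ0 : φ ≠ 0)
    (hγmul : ∀ x y : B, γ (x * y) = γ x * γ y) (hγ0 : γ ≠ 0)
    (d : A × B →ₗ[ℂ] A × B)
    (hd : ∀ (a : A) (b : B),
      d (lauMul θ (a, b) (a, b)) = lauMul φ (d (a, b)) (a, b) + lauMul γ (a, b) (d (a, b)))
 :
    (θ = φ ∧ θ = γ) ∨
      (∀ a : A, (d (a, 0)).2 = 0 ∧ ∀ x : A, x * (d (a, 0)).1 = 0) := by
  have hmk : ∀ s t : A, ((s + t, (0:B)) : A × B) = (s, 0) + (t, 0) := by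
    intro s t; rw [Prod.mk_add_mk, add_zero]
  have hsqS : ∀ y : A, (d (y * y, 0)).2 = 0 := by
    intro y
    have h := congrArg Prod.snd (hd y 0)
    simp only [lauMul, map_zero, zero_smul, add_zero, mul_zero, zero_mul, Prod.snd_add] at h
    simpa using h
  have hQadd : ∀ s t : A, (d (s + t, 0)).2 = (d (s,0)).2 + (d (t,0)).2 := by
    intro s t; rw [hmk, map_add, Prod.snd_add]
  have hexp : ∀ a x : A, (a + x) * (a + x) = a*a + (a*x + x*a) + x*x := by
    intro a x; noncomm_ring
  have hQmix : ∀ a x : A, (d (a*x + x*a, 0)).2 = 0 := by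
    intro a x
    have h := hsqS (a + x)
    rw [hexp] at h
    rw [show ((a*a + (a*x + x*a) + x*x, (0:B)) : A×B)
        = (a*a, 0) + (a*x + x*a, 0) + (x*x, 0) by simp [Prod.mk_add_mk]] at h
    rw [map_add, map_add, Prod.snd_add, Prod.snd_add, hsqS a, hsqS x] at h
    simpa using h
  have hQu : ∀ a : A, (d (u * a, 0)).2 = 0 := by
    intro a
    have h := hQmix (u*a) u
    rw [hu (u*a), ← mul_assoc, hu u, hQadd] at h
    have h2 : (2:ℂ) • (d (u * a, 0)).2 = 0 := by rw [two_smul]; exact h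
    exact (smul_eq_zero.mp h2).resolve_left two_ne_zero
  have hQ : ∀ a : A, (d (a, 0)).2 = 0 := by
    intro a
    have h := hQmix a u
    rw [hu a, hQadd, hQu a, add_zero] at h
    exact h
  -- first component lemmas
  have hPadd : ∀ s t : A, (d (s + t, 0)).1 = (d (s,0)).1 + (d (t,0)).1 := by
    intro s t; rw [hmk, map_add, Prod.fst_add]
  have hsqF : ∀ y : A, (d (y * y, 0)).1 = (d (y,0)).1 * y + y * (d (y,0)).1 := by
    intro y
    have h := congrArg Prod.fst (hd y 0)
    simp only [lauMul, map_zero, zero_smul, add_zero, mul_zero, zero_mul, Prod.fst_add,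
      hQ, smul_zero, zero_add] at h
    simpa using h
  have hII : ∀ a x : A, (d (a*x + x*a, 0)).1
      = (d (a,0)).1 * x + (d (x,0)).1 * a + a * (d (x,0)).1 + x * (d (a,0)).1 := by
    intro a x
    have h := hsqF (a + x)
    rw [hexp] at h
    rw [show ((a*a + (a*x + x*a) + x*x, (0:B)) : A×B)
        = (a*a, 0) + (a*x + x*a, 0) + (x*x, 0) by simp [Prod.mk_add_mk]] at h
    rw [map_add, map_add, Prod.fst_add, Prod.fst_add, hsqF a, hsqF x, hPadd a x] at h
    have h2 : ((d (a,0)).1 + (d (x,0)).1) * (a + x) + (a + x) * ((d (a,0)).1 + (d (x,0)).1)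
        = ((d (a,0)).1 * a + a * (d (a,0)).1)
          + ((d (a,0)).1 * x + (d (x,0)).1 * a + a * (d (x,0)).1 + x * (d (a,0)).1)
          + ((d (x,0)).1 * x + x * (d (x,0)).1) := by noncomm_ring
    rw [h2] at h
    exact add_left_cancel (add_right_cancel h)
  by_cases hcase : ∀ b : B, (2:ℂ) * θ b = φ b + γ b
  · left
    have hφγ : ∀ b : B, φ b = γ b := by
      intro b
      have h1 := hcase b
      have h2 := hcase (b*b)
      rw [hθmul, hφmul, hγmul] at h2
      have h3 : (φ b - γ b)^2 = 0 := by
        linear_combination (2*θ b + φ b + γ b) * h1 - 2 * h2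
      exact sub_eq_zero.mp (pow_eq_zero_iff two_ne_zero |>.mp h3)
    have hθφ : θ = φ := by
      apply LinearMap.ext; intro b
      have h1 := hcase b
      rw [hφγ b] at h1
      have h2 : (2:ℂ) * θ b = 2 * γ b := by linear_combination h1
      exact (mul_left_cancel₀ two_ne_zero h2).trans (hφγ b).symm
    exact ⟨hθφ, hθφ.trans (LinearMap.ext hφγ)⟩
  · right
    push_neg at hcase
    obtain ⟨b₀, hb₀⟩ := hcase
    have hB1 : (d (0, b₀*b₀)).1 = φ b₀ • (d (0,b₀)).1 + γ b₀ • (d (0,b₀)).1 := by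
      have h := congrArg Prod.fst (hd 0 b₀)
      simp only [lauMul, mul_zero, zero_mul, smul_zero, zero_add, add_zero, Prod.fst_add] at h
      exact h
    have hsplit : ((a₁ : A) → ((a₁, b₀) : A × B) = (a₁, 0) + (0, b₀)) := by
      intro a₁; rw [Prod.mk_add_mk, add_zero, zero_add]
    have hR : ∀ a : A, (2 * θ b₀) • (d (a,0)).1
        = (φ b₀ + γ b₀) • (d (a,0)).1 + (d (0,b₀)).1 * a + a * (d (0,b₀)).1
          + (φ ((d (0,b₀)).2) + γ ((d (0,b₀)).2)) • a := by
      intro a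
      have h := congrArg Prod.fst (hd a b₀)
      simp only [lauMul] at h
      rw [hsplit a, map_add] at h
      rw [show ((a*a + θ b₀ • a + θ b₀ • a, b₀*b₀) : A×B)
          = (a*a, 0) + θ b₀ • ((a,0) : A×B) + θ b₀ • ((a,0) : A×B) + (0, b₀*b₀) by
            simp [Prod.smul_mk, Prod.mk_add_mk]] at h
      simp only [map_add, map_smul, Prod.fst_add, Prod.snd_add, Prod.smul_fst, hQ,
        zero_add] at h
      rw [hsqF a, hB1] at h
      simp only [add_mul, mul_add, smul_add] at h
      linear_combination (norm := module) h
    have hIV : ∀ a y : A,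
        (2:ℂ) • (a * (d (0,b₀)).1 * y) + (2:ℂ) • (y * (d (0,b₀)).1 * a)
          + (φ ((d (0,b₀)).2) + γ ((d (0,b₀)).2)) • (a * y)
          + (φ ((d (0,b₀)).2) + γ ((d (0,b₀)).2)) • (y * a) = 0 := by
      intro a y
      have h1 := hR (a*y + y*a)
      rw [hII a y] at h1
      have h3 := congrArg (· * y) (hR a)
      have h4 := congrArg (· * a) (hR y)
      have h5 := congrArg (a * ·) (hR y)
      have h6 := congrArg (y * ·) (hR a)
      simp only [add_mul, mul_add, smul_add, smul_mul_assoc, mul_smul_comm,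
        ← mul_assoc] at h1 h3 h4 h5 h6
      linear_combination (norm := module) h1 - h3 - h4 - h5 - h6
    intro a
    refine ⟨hQ a, fun x => ?_⟩
    have hV := hIV a u
    simp only [hu] at hV
    have hVx := congrArg (x * ·) hV
    simp only [mul_add, mul_smul_comm, ← mul_assoc, mul_zero, hu] at hVx
    have h6 := congrArg (x * ·) (hR a)
    simp only [mul_add, mul_smul_comm, ← mul_assoc] at h6
    have hz : ((2:ℂ) * (2 * θ b₀ - (φ b₀ + γ b₀))) • (x * (d (a,0)).1) = 0 := by
      linear_combination (norm := module) (2:ℂ) • h6 + hVx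
    have h2ne : (2:ℂ) * (2 * θ b₀ - (φ b₀ + γ b₀)) ≠ 0 :=
      mul_ne_zero two_ne_zero (sub_ne_zero.mpr hb₀)
    exact (smul_eq_zero.mp hz).resolve_left h2ne
end

section
/- Let A be a complex Banach algebra with an identity element u (two-sided unit), let B be a complex Banach algebra, and let θ, φ, γ be nonzero multiplicative linear functionals on B. If d ∈ Der_J(A ×_θ^{φ,γ} B), then either θ = φ = γ, or d(a,0) = (0,0) for every a ∈ A. -/
/-- Corollary 2.3 (ii), unital case: if `A` has an identity, then either `θ = φ = γ` or
`d` is zero on `A × {0}`. -/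
theorem lau_jordan_theta_eq_or_zero_of_unital
    {A B : Type*}
    [NonUnitalNormedRing A] [NormedSpace ℂ A] [IsScalarTower ℂ A A] [SMulCommClass ℂ A A]
    [CompleteSpace A]
    [NonUnitalNormedRing B] [NormedSpace ℂ B] [IsScalarTower ℂ B B] [SMulCommClass ℂ B B]
    [CompleteSpace B]
    (u : A) (hu : ∀ a : A, a * u = a) (hu' : ∀ a : A, u * a = a)
    (θ φ γ : B →ₗ[ℂ] ℂ)
    (hθmul : ∀ x y : B, θ (x * y) = θ x * θ y) (hθ0 : θ ≠ 0)
    (hφmul : ∀ x y : B, φ (x * y) = φ x * φ y) (hφ0 : φ ≠ 0)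
    (hγmul : ∀ x y : B, γ (x * y) = γ x * γ y) (hγ0 : γ ≠ 0)
    (d : A × B →ₗ[ℂ] A × B)
    (hd : ∀ (a : A) (b : B),
      d (lauMul θ (a, b) (a, b)) = lauMul φ (d (a, b)) (a, b) + lauMul γ (a, b) (d (a, b)))
 :
    (θ = φ ∧ θ = γ) ∨ (∀ a : A, d (a, 0) = 0) := by
  -- polarized identity
  have hpol : ∀ p q : A × B,
      d (lauMul θ p q + lauMul θ q p) =
        lauMul φ (d p) q + lauMul γ p (d q) + lauMul φ (d q) p + lauMul γ q (d p) := by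
    have hl : ∀ (ψ : B →ₗ[ℂ] ℂ) (p q r : A × B),
        lauMul ψ (p + q) r = lauMul ψ p r + lauMul ψ q r := by
      intro ψ p q r
      refine Prod.ext ?_ ?_ <;>
        simp [lauMul, add_mul, mul_add, add_smul, smul_add, map_add] <;> abel
    have hr : ∀ (ψ : B →ₗ[ℂ] ℂ) (p q r : A × B),
        lauMul ψ r (p + q) = lauMul ψ r p + lauMul ψ r q := by
      intro ψ p q r
      refine Prod.ext ?_ ?_ <;>
        simp [lauMul, add_mul, mul_add, add_smul, smul_add, map_add] <;> abel
    intro p q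
    have h1 := hd (p.1 + q.1) (p.2 + q.2)
    have h2 := hd p.1 p.2
    have h3 := hd q.1 q.2
    simp only [Prod.mk.eta] at h1 h2 h3
    rw [show ((p.1 + q.1 : A), (p.2 + q.2 : B)) = p + q from rfl] at h1
    simp only [hl, hr, map_add] at h1
    rw [h2, h3] at h1
    rw [map_add]
    rw [← sub_eq_zero] at h1 ⊢
    abel_nf at h1 ⊢
    exact h1
  -- second component of d on A × {0} vanishes
  have hS : ∀ a : A, (d (a, 0)).2 = 0 := by
    intro a
    have h := hpol ((a : A), (0 : B)) ((u : A), (0 : B))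
    rw [show lauMul θ ((a : A), (0 : B)) (u, 0) + lauMul θ ((u : A), (0 : B)) (a, 0)
        = ((a : A), (0 : B)) + ((a : A), (0 : B)) from by
      simp [lauMul, hu, hu']] at h
    rw [map_add] at h
    have h2 := congrArg Prod.snd h
    simp [lauMul] at h2
    have h3 : (2 : ℂ) • (d ((a : A), (0 : B))).2 = 0 := by
      rw [two_smul]; exact h2
    simpa [two_ne_zero] using (smul_eq_zero.mp h3)
  -- d (u, 0) = 0
  have hdu : d ((u : A), (0 : B)) = 0 := by
    have h := hpol ((u : A), (0 : B)) ((u : A), (0 : B))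
    rw [show lauMul θ ((u : A), (0 : B)) (u, 0) + lauMul θ ((u : A), (0 : B)) (u, 0)
        = ((u : A), (0 : B)) + ((u : A), (0 : B)) from by
      simp [lauMul, hu]] at h
    rw [map_add] at h
    have h1 := congrArg Prod.fst h
    simp [lauMul, hu, hu', hS] at h1
    have h2 : (2 : ℂ) • (d ((u : A), (0 : B))).1 = 0 := by rw [two_smul]; exact h1
    have h3 : (d ((u : A), (0 : B))).1 = 0 := by simpa [two_ne_zero] using smul_eq_zero.mp h2
    rw [Prod.ext_iff]
    exact ⟨by simpa using h3, by simpa using hS u⟩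
  -- main estimate for arbitrary a, b
  have hkey : ∀ (a : A) (b : B), ((2 : ℂ) * (2 * θ b - φ b - γ b)) • (d ((a : A), (0 : B))).1 = 0 := by
    intro a b
    have h := hpol ((a : A), (0 : B)) ((0 : A), b)
    rw [show lauMul θ ((a : A), (0 : B)) ((0 : A), b) + lauMul θ ((0 : A), b) ((a : A), (0 : B))
        = θ b • ((a : A), (0 : B)) + θ b • ((a : A), (0 : B)) from by
      simp [lauMul]] at h
    rw [map_add, map_smul] at h
    have h1 := congrArg Prod.fst h
    simp only [lauMul, Prod.fst_add, Prod.smul_fst, Prod.snd_add, Prod.smul_snd] at h1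
    simp only [hS, map_zero, zero_smul, mul_zero, zero_mul, add_zero, zero_add, smul_zero] at h1
    have hrr := hpol ((u : A), (0 : B)) ((0 : A), b)
    rw [show lauMul θ ((u : A), (0 : B)) ((0 : A), b) + lauMul θ ((0 : A), b) ((u : A), (0 : B))
        = θ b • ((u : A), (0 : B)) + θ b • ((u : A), (0 : B)) from by
      simp [lauMul]] at hrr
    rw [map_add, map_smul, hdu] at hrr
    have h2 := congrArg Prod.fst hrr
    simp only [lauMul, Prod.fst_add, Prod.smul_fst, Prod.snd_add, Prod.smul_snd,
      Prod.fst_zero, Prod.snd_zero] at h2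
    simp only [hS, map_zero, zero_smul, mul_zero, zero_mul, add_zero, zero_add, smul_zero,
      hu, hu'] at h2
    have e1 := congrArg (fun x => a * x) h2
    have e2 := congrArg (fun x => x * a) h2
    simp only [mul_zero, zero_mul, mul_add, add_mul, mul_smul_comm, smul_mul_assoc,
      hu, hu'] at e1 e2
    have comb := congrArg₂ (· + ·) (congrArg₂ (· + ·) h1 h1) (congrArg₂ (· + ·) e1.symm e2.symm)
    have key' : θ b • (d ((a : A), (0 : B))).1 + θ b • (d ((a : A), (0 : B))).1
          + (θ b • (d ((a : A), (0 : B))).1 + θ b • (d ((a : A), (0 : B))).1)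
        = φ b • (d ((a : A), (0 : B))).1 + φ b • (d ((a : A), (0 : B))).1
          + (γ b • (d ((a : A), (0 : B))).1 + γ b • (d ((a : A), (0 : B))).1) := by
      rw [← sub_eq_zero] at comb ⊢
      abel_nf at comb ⊢
      exact comb
    have hmod : ((2 : ℂ) * (2 * θ b - φ b - γ b)) • (d ((a : A), (0 : B))).1
        = (θ b • (d ((a : A), (0 : B))).1 + θ b • (d ((a : A), (0 : B))).1
            + (θ b • (d ((a : A), (0 : B))).1 + θ b • (d ((a : A), (0 : B))).1))
          - (φ b • (d ((a : A), (0 : B))).1 + φ b • (d ((a : A), (0 : B))).1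
            + (γ b • (d ((a : A), (0 : B))).1 + γ b • (d ((a : A), (0 : B))).1)) := by
      module
    rw [hmod, key', sub_self]
  -- case split
  by_cases hcase : ∀ b : B, 2 * θ b = φ b + γ b
  · left
    have hφγ : φ = γ := by
      apply LinearMap.ext
      intro x
      have h1 := hcase (x * x)
      have h2 := hcase x
      rw [hθmul, hφmul, hγmul] at h1
      have h0 : (φ x - γ x) * (φ x - γ x) = 0 := by
        linear_combination (2 * θ x + φ x + γ x) * h2 - 2 * h1
      exact sub_eq_zero.mp (mul_self_eq_zero.mp h0)
    have hθφ : θ = φ := by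
      apply LinearMap.ext
      intro x
      have h2 := hcase x
      rw [← hφγ] at h2
      linear_combination h2 / 2
    exact ⟨hθφ, hθφ.trans hφγ⟩
  · right
    push_neg at hcase
    obtain ⟨b, hb⟩ := hcase
    intro a
    have hb' : (2 : ℂ) * (2 * θ b - φ b - γ b) ≠ 0 := by
      refine mul_ne_zero two_ne_zero ?_
      intro hzero
      apply hb
      linear_combination hzero
    have h1 : (d ((a : A), (0 : B))).1 = 0 := by
      have := hkey a b
      rcases smul_eq_zero.mp this with h | h
      · exact absurd h hb'
      · exact h
    rw [Prod.ext_iff]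
    exact ⟨by simpa using h1, by simpa using hS a⟩
end

section
/- Let A be a semisimple complex Banach algebra (Jacobson radical zero) with a right identity u, let B be a complex Banach algebra, and let θ, φ, γ be nonzero multiplicative linear functionals on B. If d ∈ Der_J(A ×_θ^{φ,γ} B), then either θ = φ = γ, or d(a,0) = (0,0) for every a ∈ A. -/
/-- Corollary 2.3 (ii), semisimple case: if `A` is semisimple (Jacobson radical zero,
expressed via left quasi-regularity of the left ideal generated by each radical element),
then either `θ = φ = γ` or `d` is zero on `A × {0}`. -/
theorem lau_jordan_theta_eq_or_zero_of_semisimple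
    {A B : Type*}
    [NonUnitalNormedRing A] [NormedSpace ℂ A] [IsScalarTower ℂ A A] [SMulCommClass ℂ A A]
    [CompleteSpace A]
    [NonUnitalNormedRing B] [NormedSpace ℂ B] [IsScalarTower ℂ B B] [SMulCommClass ℂ B B]
    [CompleteSpace B]
    (u : A) (hu : ∀ a : A, a * u = a)
    (hss : ∀ z : A,
      (∀ (c : ℂ) (a : A), ∃ y : A, y + (c • z + a * z) = y * (c • z + a * z)) → z = 0)
    (θ φ γ : B →ₗ[ℂ] ℂ)
    (hθmul : ∀ x y : B, θ (x * y) = θ x * θ y) (hθ0 : θ ≠ 0)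
    (hφmul : ∀ x y : B, φ (x * y) = φ x * φ y) (hφ0 : φ ≠ 0)
    (hγmul : ∀ x y : B, γ (x * y) = γ x * γ y) (hγ0 : γ ≠ 0)
    (d : A × B →ₗ[ℂ] A × B)
    (hd : ∀ (a : A) (b : B),
      d (lauMul θ (a, b) (a, b)) = lauMul φ (d (a, b)) (a, b) + lauMul γ (a, b) (d (a, b)))
 :
    (θ = φ ∧ θ = γ) ∨ (∀ a : A, d (a, 0) = 0) := by
  classical
  -- T := (d (·,0)).2 vanishes on squares
  have Tsq : ∀ x : A, (d (x * x, 0)).2 = 0 := by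
    intro x
    have h := congrArg Prod.snd (hd x 0)
    simpa [lauMul] using h
  -- ... hence on Jordan products
  have Tpol : ∀ x y : A, (d (x * y + y * x, 0)).2 = 0 := by
    intro x y
    have h := Tsq (x + y)
    have e : (((x + y) * (x + y) : A), (0 : B)) = (x * x, 0) + (x * y + y * x, 0) + (y * y, 0) := by
      have e1 : (x + y) * (x + y) = x * x + (x * y + y * x) + y * y := by
        rw [mul_add, add_mul, add_mul]; abel
      simp [e1]
    rw [e, map_add, map_add] at h
    simp only [Prod.snd_add, Tsq x, Tsq y, zero_add, add_zero] at h
    exact h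
  -- ... hence everywhere (using the right identity)
  have Tux : ∀ x : A, (d (u * x, 0)).2 = 0 := by
    intro x
    have h := Tpol (u * x) u
    rw [hu (u * x), ← mul_assoc, hu u] at h
    have e : ((u * x + u * x : A), (0 : B)) = (u * x, 0) + (u * x, 0) := by simp
    rw [e, map_add] at h
    simp only [Prod.snd_add] at h
    have h3 : (2 : ℂ) • (d (u * x, 0)).2 = 0 := by rw [two_smul]; exact h
    exact (smul_eq_zero.mp h3).resolve_left (by norm_num)
  have Tzero : ∀ x : A, (d (x, 0)).2 = 0 := by
    intro x
    have h := Tpol x u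
    rw [hu x] at h
    have e : ((x + u * x : A), (0 : B)) = (x, 0) + (u * x, 0) := by simp
    rw [e, map_add] at h
    simp only [Prod.snd_add, Tux x, add_zero] at h
    exact h
  -- D := (d (·,0)).1 is a Jordan derivation
  have Dsq : ∀ x : A, (d (x * x, 0)).1 = (d (x, 0)).1 * x + x * (d (x, 0)).1 := by
    intro x
    have h := congrArg Prod.fst (hd x 0)
    simp only [lauMul, map_zero, zero_smul, add_zero, mul_zero, zero_mul, Prod.fst_add,
      Tzero x, smul_zero, zero_add] at h
    exact h
  by_cases hcase : ∀ b : B, 2 * θ b = φ b + γ b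
  · left
    have hφγ : ∀ b, φ b = γ b := by
      intro b
      have e1 := hcase (b * b)
      rw [hθmul, hφmul, hγmul] at e1
      have e2 := hcase b
      have hsq : (φ b - γ b) ^ 2 = 0 := by
        linear_combination (-2 : ℂ) * e1 + (2 * θ b + φ b + γ b) * e2
      have h0 : φ b - γ b = 0 := by
        have := pow_eq_zero_iff (two_ne_zero) |>.mp hsq
        exact this
      exact sub_eq_zero.mp h0
    constructor
    · ext b
      have h1 := hcase b
      have h2 := hφγ b
      linear_combination ((1:ℂ)/2) * h1 - ((1:ℂ)/2) * h2
    · ext b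
      have h1 := hcase b
      have h2 := hφγ b
      linear_combination ((1:ℂ)/2) * h1 + ((1:ℂ)/2) * h2
  · right
    push_neg at hcase
    obtain ⟨b₀, hb₀⟩ := hcase
    set v : A := (d (0, b₀)).1 with hv
    set s : B := (d (0, b₀)).2 with hs
    set μ : ℂ := φ s + γ s with hμ
    set c : ℂ := 2 * θ b₀ - φ b₀ - γ b₀ with hc
    have hcne : c ≠ 0 := by
      rw [hc]; intro h; apply hb₀; linear_combination h
    have dxb : ∀ x : A, d (x, b₀) = d (x, 0) + d (0, b₀) := by
      intro x
      rw [← map_add]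
      norm_num
    have e3 : (d (0, b₀ * b₀)).1 = φ b₀ • v + γ b₀ • v := by
      have h := congrArg Prod.fst (hd 0 b₀)
      simp only [lauMul, map_zero, zero_smul, smul_zero, add_zero, zero_add, mul_zero, zero_mul,
        Prod.fst_add] at h
      exact h
    have M1 : ∀ x : A, c • (d (x, 0)).1 = v * x + x * v + μ • x := by
      intro x
      have h := congrArg Prod.fst (hd x b₀)
      have decomp : lauMul θ (x, b₀) (x, b₀)
          = (x * x, 0) + θ b₀ • (x, 0) + θ b₀ • (x, 0) + ((0 : A), b₀ * b₀) := by
        simp [lauMul, Prod.ext_iff]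
      rw [decomp, dxb x] at h
      simp only [map_add, map_smul] at h
      simp only [lauMul, Prod.fst_add, Prod.snd_add, Prod.smul_fst, Tzero x, zero_add,
        add_mul, mul_add, e3, Dsq x, map_add] at h
      linear_combination (norm := module) h
    have dagger : ∀ x : A, x * (v * x) + x * (v * x) + μ • (x * x) = 0 := by
      intro x
      have h1 := M1 (x * x)
      rw [Dsq x, smul_add, ← smul_mul_assoc, ← mul_smul_comm, M1 x] at h1
      simp only [add_mul, mul_add, smul_mul_assoc, mul_smul_comm, mul_assoc] at h1
      linear_combination (norm := module) h1
    have PU : ∀ x : A, x * v + u * (v * x) + x * v + u * (v * x) + μ • x + μ • (u * x) = 0 := by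
      intro x
      have h1 := dagger (x + u)
      have h2 := dagger x
      have h3 := dagger u
      simp only [mul_add, add_mul, hu] at h1 h3
      linear_combination (norm := module) h1 - h2 - h3
    intro a
    have hz : c • (d (a, 0)).1
        = (v * a + ((1:ℂ)/2 * μ) • a) - (u * (v * a) + ((1:ℂ)/2 * μ) • (u * a)) := by
      linear_combination (norm := module) M1 a + ((1:ℂ)/2) • PU a
    have hyz : ∀ y : A, y * (c • (d (a, 0)).1) = 0 := by
      intro y
      rw [hz]
      simp only [mul_sub, mul_add, mul_smul_comm, ← mul_assoc, hu]
      abel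
    have hz0 : (d (a, 0)).1 = 0 := by
      have h0 : c • (d (a, 0)).1 = 0 := by
        apply hss
        intro c' y
        refine ⟨-(c' • (c • (d (a, 0)).1)), ?_⟩
        rw [hyz y, add_zero]
        have hmm : (c' • (c • (d (a, 0)).1)) * (c' • (c • (d (a, 0)).1)) = 0 := by
          rw [smul_mul_assoc, mul_smul_comm, hyz, smul_zero, smul_zero]
        rw [neg_mul, hmm, neg_zero, neg_add_cancel]
      exact (smul_eq_zero.mp h0).resolve_left hcne
    exact Prod.ext hz0 (Tzero a)
end

section
/- Let A be a complex Banach algebra with a right identity u, let B be a complex Banach algebra, and let θ, φ, γ be nonzero multiplicative linear functionals on B. Suppose d ∈ Der_J(A ×_θ^{φ,γ} B) is moreover a (θ,φ,γ)-derivation, i.e. d((a,b)·_θ(x,y)) = d(a,b)·_φ(x,y) + (a,b)·_γ d(x,y) for all a,x ∈ A and b,y ∈ B. Then d_A(a) = π_A(d(a,0)) is a derivation on A and d_B(b) = π_B(d(0,b)) is a derivation on B. -/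
/-- Theorem 2.4 (i): if `d` is a `(θ,φ,γ)`-derivation, then `d_A` is a derivation on `A`
and `d_B` is a derivation on `B`. -/
theorem lau_derivation_components_are_derivations
    {A B : Type*}
    [NonUnitalNormedRing A] [NormedSpace ℂ A] [IsScalarTower ℂ A A] [SMulCommClass ℂ A A]
    [CompleteSpace A]
    [NonUnitalNormedRing B] [NormedSpace ℂ B] [IsScalarTower ℂ B B] [SMulCommClass ℂ B B]
    [CompleteSpace B]
    (u : A) (hu : ∀ a : A, a * u = a)
    (θ φ γ : B →ₗ[ℂ] ℂ)
    (hθmul : ∀ x y : B, θ (x * y) = θ x * θ y) (hθ0 : θ ≠ 0)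
    (hφmul : ∀ x y : B, φ (x * y) = φ x * φ y) (hφ0 : φ ≠ 0)
    (hγmul : ∀ x y : B, γ (x * y) = γ x * γ y) (hγ0 : γ ≠ 0)
    (d : A × B →ₗ[ℂ] A × B)
    (hd : ∀ (a : A) (b : B),
      d (lauMul θ (a, b) (a, b)) = lauMul φ (d (a, b)) (a, b) + lauMul γ (a, b) (d (a, b)))
    (hd' : ∀ (a x : A) (b y : B),
      d (lauMul θ (a, b) (x, y)) = lauMul φ (d (a, b)) (x, y) + lauMul γ (a, b) (d (x, y)))
    (dA : A → A) (hdA : ∀ a : A, dA a = (d (a, 0)).1)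
    (dB : B → B) (hdB : ∀ b : B, dB b = (d (0, b)).2)
 :
    (∀ a x : A, dA (a * x) = dA a * x + a * dA x) ∧
    (∀ b y : B, dB (b * y) = dB b * y + b * dB y) := by
  have hτ : ∀ a : A, (d (a, 0)).2 = 0 := by
    intro a
    have h := hd' a u 0 0
    have h1 : lauMul θ ((a : A), (0 : B)) (u, 0) = (a, 0) := by
      simp [lauMul, hu a]
    rw [h1] at h
    have h2 := congrArg Prod.snd h
    simpa [lauMul] using h2
  constructor
  · intro a x
    have h := hd' a x 0 0
    have h1 : lauMul θ ((a : A), (0 : B)) (x, 0) = (a * x, 0) := by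
      simp [lauMul]
    rw [h1] at h
    have h2 := congrArg Prod.fst h
    simp [lauMul, hτ] at h2
    simp [hdA, h2]
  · intro b y
    have h := hd' 0 0 b y
    have h1 : lauMul θ ((0 : A), b) (0, y) = (0, b * y) := by
      simp [lauMul]
    rw [h1] at h
    have h2 := congrArg Prod.snd h
    simp [lauMul] at h2
    simp [hdB, h2]
end

section
/- Let A be a complex Banach algebra with a right identity u, let B be a complex Banach algebra, and let θ, φ, γ be nonzero multiplicative linear functionals on B. Suppose d ∈ Der_J(A ×_θ^{φ,γ} B) is moreover a (θ,φ,γ)-derivation. Then, with d_A(a) = π_A(d(a,0)) and d_B(b) = π_B(d(0,b)), for all a ∈ A and b ∈ B one has (θ(b) − φ(b)) d_A(a) = 0 and (θ(b) − γ(b))(d_A(a) − d_A(u) a) = 0. -/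
lemma my_smul_cancel {M : Type*} [AddCommGroup M] [Module ℂ M] {c : ℂ} (hc : c ≠ 0) {v w : M}
    (h : c • v = c • w) : v = w := by
  have := congrArg (fun x => c⁻¹ • x) h
  simpa [smul_smul, inv_mul_cancel₀ hc] using this

/-- Theorem 2.4 (ii): if `d` is a `(θ,φ,γ)`-derivation, then
`(θ(b) − φ(b)) d_A(a) = 0` and `(θ(b) − γ(b))(d_A(a) − d_A(u)a) = 0`. -/
theorem lau_derivation_condition_ii
    {A B : Type*}
    [NonUnitalNormedRing A] [NormedSpace ℂ A] [IsScalarTower ℂ A A] [SMulCommClass ℂ A A]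
    [CompleteSpace A]
    [NonUnitalNormedRing B] [NormedSpace ℂ B] [IsScalarTower ℂ B B] [SMulCommClass ℂ B B]
    [CompleteSpace B]
    (u : A) (hu : ∀ a : A, a * u = a)
    (θ φ γ : B →ₗ[ℂ] ℂ)
    (hθmul : ∀ x y : B, θ (x * y) = θ x * θ y) (hθ0 : θ ≠ 0)
    (hφmul : ∀ x y : B, φ (x * y) = φ x * φ y) (hφ0 : φ ≠ 0)
    (hγmul : ∀ x y : B, γ (x * y) = γ x * γ y) (hγ0 : γ ≠ 0)
    (d : A × B →ₗ[ℂ] A × B)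
    (hd : ∀ (a : A) (b : B),
      d (lauMul θ (a, b) (a, b)) = lauMul φ (d (a, b)) (a, b) + lauMul γ (a, b) (d (a, b)))
    (hd' : ∀ (a x : A) (b y : B),
      d (lauMul θ (a, b) (x, y)) = lauMul φ (d (a, b)) (x, y) + lauMul γ (a, b) (d (x, y)))
    (dA : A → A) (hdA : ∀ a : A, dA a = (d (a, 0)).1)
 :
    ∀ (a : A) (b : B),
      (θ b - φ b) • dA a = 0 ∧ (θ b - γ b) • (dA a - dA u * a) = 0 := by
  classical
  -- second component of d(a,0) vanishes
  have he : ∀ x : A, (d (x, (0:B))).2 = 0 := by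
    intro x
    have h := congrArg Prod.snd (hd' x u 0 0)
    simpa [lauMul, hu] using h
  -- product rule for the A-part
  have h4 : ∀ a x : A, (d (a * x, (0:B))).1 = (d (a,0)).1 * x + a * (d (x,0)).1 := by
    intro a x
    have h := congrArg Prod.fst (hd' a x 0 0)
    simpa [lauMul, he] using h
  -- d(0, b*y)
  have h3 : ∀ b y : B, d ((0:A), b * y) =
      (φ y • (d (0,b)).1 + γ b • (d (0,y)).1, (d (0,b)).2 * y + b * (d (0,y)).2) := by
    intro b y
    have h := hd' 0 0 b y
    simpa [lauMul, Prod.ext_iff] using h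
  -- equation (1)
  have h1 : ∀ (a : A) (b : B), (θ b - φ b) • (d (a,(0:B))).1
      = a * (d ((0:A),b)).1 + γ ((d ((0:A),b)).2) • a := by
    intro a b
    have h := hd' a 0 0 b
    have hsm : (lauMul θ ((a,(0:B))) ((0:A),b)) = θ b • ((a, 0) : A × B) := by
      simp [lauMul, Prod.ext_iff]
    rw [hsm, map_smul] at h
    have h' := congrArg Prod.fst h
    simp only [lauMul, Prod.smul_fst, Prod.fst_add, mul_zero, zero_add, map_zero, zero_smul,
      add_zero, smul_zero, zero_mul] at h'
    linear_combination (norm := module) h'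
  -- equation (2)
  have h2 : ∀ (a : A) (b : B), (θ b - γ b) • (d (a,(0:B))).1
      = (d ((0:A),b)).1 * a + φ ((d ((0:A),b)).2) • a := by
    intro a b
    have h := hd' 0 a b 0
    have hsm : (lauMul θ (((0:A),b)) (a,(0:B))) = θ b • ((a, 0) : A × B) := by
      simp [lauMul, Prod.ext_iff]
    rw [hsm, map_smul] at h
    have h' := congrArg Prod.fst h
    simp only [lauMul, Prod.smul_fst, Prod.fst_add, mul_zero, zero_add, map_zero, zero_smul,
      add_zero, smul_zero, zero_mul] at h'
    linear_combination (norm := module) h'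
  -- (I): (θ b - φ b) • (T c * a) = 0
  have hI : ∀ (b : B) (c a : A), (θ b - φ b) • ((d (c,(0:B))).1 * a) = 0 := by
    intro b c a
    have e1 := h1 (c*a) b
    rw [h4 c a, mul_assoc] at e1
    have e2 := congrArg (fun z => c * z) (h1 a b)
    simp only [mul_smul_comm, mul_add] at e2
    linear_combination (norm := module) e1 - e2
  -- (II): (θ b - γ b) • (a * T c) = 0
  have hII : ∀ (b : B) (a c : A), (θ b - γ b) • (a * (d (c,(0:B))).1) = 0 := by
    intro b a c
    have e1 := h2 (a*c) b
    rw [h4 a c, ← mul_assoc] at e1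
    have e2 := congrArg (fun z => z * c) (h2 a b)
    simp only [smul_mul_assoc, add_mul] at e2
    linear_combination (norm := module) e1 - e2
  -- (*) identity
  have hstar : ∀ (y b : B) (a : A), ((θ y - φ y) * (θ b - γ b)) • (d (a,(0:B))).1
      = ((γ y - φ y) * γ ((d ((0:A),b)).2)) • a := by
    intro y b a
    have e3 := h1 a (b*y)
    rw [h3 b y] at e3
    simp only [hθmul, hφmul] at e3
    rw [map_add, hγmul, hγmul, mul_add, mul_smul_comm, mul_smul_comm] at e3
    linear_combination (norm := module) e3 - (φ y) • (h1 a b) - (γ b) • (h1 a y)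
  -- (**) identity
  have hstar2 : ∀ (y b : B) (a : A), ((θ y - γ y) * (θ b - φ b)) • (d (a,(0:B))).1
      = ((φ y - γ y) * φ ((d ((0:A),b)).2)) • a := by
    intro y b a
    have e3 := h2 a (y*b)
    rw [h3 y b] at e3
    simp only [hθmul, hγmul] at e3
    rw [map_add, hφmul, hφmul, add_mul, smul_mul_assoc, smul_mul_assoc] at e3
    linear_combination (norm := module) e3 - (φ b) • (h2 a y) - (γ y) • (h2 a b)
  -- reduction for goal 2
  have hR : ∀ (a : A) (b : B), (θ b - γ b) • ((d (a,(0:B))).1 - (d (u,(0:B))).1 * a)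
      = φ ((d ((0:A),b)).2) • a - φ ((d ((0:A),b)).2) • (u * a) := by
    intro a b
    have e1 := h2 a b
    have e2 := h2 (u*a) b
    rw [h4 u a, ← mul_assoc, hu] at e2
    linear_combination (norm := module) e1 - e2 + hII b u a
  -- key lemma 1
  have key1 : (∃ y, θ y ≠ γ y) → ∀ (b : B) (a : A), (θ b - φ b) • (d (a,(0:B))).1 = 0 := by
    rintro ⟨y1, hy1⟩ b a
    have hy1' : θ y1 - γ y1 ≠ 0 := sub_ne_zero.mpr hy1
    have hk : ∀ (b : B) (a : A), (θ b - φ b) • (d (a,(0:B))).1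
        = (((θ y1 - γ y1)⁻¹ * (φ y1 - γ y1)) * φ ((d ((0:A),b)).2)) • a := by
      intro b a
      apply my_smul_cancel hy1'
      rw [smul_smul, smul_smul]
      rw [show (θ y1 - γ y1) * (((θ y1 - γ y1)⁻¹ * (φ y1 - γ y1)) * φ ((d ((0:A),b)).2))
          = (φ y1 - γ y1) * φ ((d ((0:A),b)).2) by field_simp]
      exact hstar2 y1 b a
    have hGbb : φ ((d ((0:A), b*b)).2) = φ ((d ((0:A),b)).2) * φ b + φ b * φ ((d ((0:A),b)).2) := by
      rw [h3 b b]
      simp only [map_add, hφmul]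
    have h1' := hk (b*b) a
    rw [hθmul, hφmul, hGbb] at h1'
    have e1 := hk b a
    have hsq : ((θ b - φ b) * (θ b - φ b)) • (d (a,(0:B))).1 = 0 := by
      linear_combination (norm := module) h1' - ((2:ℂ) * φ b) • e1
    rcases smul_eq_zero.mp hsq with h | h
    · rcases mul_self_eq_zero.mp h with h0
      rw [h0, zero_smul]
    · rw [h, smul_zero]
  -- key lemma 2
  have key2 : (∃ y, θ y ≠ φ y) → ∀ (b : B) (a : A), (θ b - γ b) • (d (a,(0:B))).1 = 0 := by
    rintro ⟨y1, hy1⟩ b a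
    have hy1' : θ y1 - φ y1 ≠ 0 := sub_ne_zero.mpr hy1
    have hk : ∀ (b : B) (a : A), (θ b - γ b) • (d (a,(0:B))).1
        = (((θ y1 - φ y1)⁻¹ * (γ y1 - φ y1)) * γ ((d ((0:A),b)).2)) • a := by
      intro b a
      apply my_smul_cancel hy1'
      rw [smul_smul, smul_smul]
      rw [show (θ y1 - φ y1) * (((θ y1 - φ y1)⁻¹ * (γ y1 - φ y1)) * γ ((d ((0:A),b)).2))
          = (γ y1 - φ y1) * γ ((d ((0:A),b)).2) by field_simp]
      exact hstar y1 b a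
    have hGbb : γ ((d ((0:A), b*b)).2) = γ ((d ((0:A),b)).2) * γ b + γ b * γ ((d ((0:A),b)).2) := by
      rw [h3 b b]
      simp only [map_add, hγmul]
    have h1' := hk (b*b) a
    rw [hθmul, hγmul, hGbb] at h1'
    have e1 := hk b a
    have hsq : ((θ b - γ b) * (θ b - γ b)) • (d (a,(0:B))).1 = 0 := by
      linear_combination (norm := module) h1' - ((2:ℂ) * γ b) • e1
    rcases smul_eq_zero.mp hsq with h | h
    · rw [mul_self_eq_zero.mp h, zero_smul]
    · rw [h, smul_zero]
  -- final assembly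
  intro a b
  constructor
  · rw [hdA]
    by_cases hθγ : ∀ y, θ y = γ y
    · by_cases hθφ : ∀ y, θ y = φ y
      · rw [hθφ b, sub_self, zero_smul]
      · push_neg at hθφ
        obtain ⟨y1, hy1⟩ := hθφ
        have hφγ1 : φ y1 - γ y1 ≠ 0 := by
          rw [show γ y1 = θ y1 from (hθγ y1).symm]
          exact sub_ne_zero.mpr (fun h => hy1 h.symm)
        have hφG : ∀ (b : B) (a : A), φ ((d ((0:A),b)).2) • a = 0 := by
          intro b a
          have h := hstar2 y1 b a
          rw [hθγ y1, sub_self, zero_mul, zero_smul] at h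
          rw [mul_smul] at h
          rcases smul_eq_zero.mp h.symm with h0 | h0
          · exact absurd h0 hφγ1
          · exact h0
        have hFb : (d ((0:A),b)).1 = 0 := by
          have h := h2 u b
          rw [hθγ b, sub_self, zero_smul, hu, hφG b u, add_zero] at h
          exact h.symm
        have hγG : γ ((d ((0:A),b)).2) • a = 0 := by
          have h := hstar y1 b a
          rw [hθγ b, sub_self, mul_zero, zero_smul] at h
          rw [mul_smul] at h
          rcases smul_eq_zero.mp h.symm with h0 | h0
          · exact absurd ((hθγ y1).trans (sub_eq_zero.mp h0)) hy1
          · exact h0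
        rw [h1 a b, hFb, mul_zero, zero_add, hγG]
    · push_neg at hθγ
      exact key1 hθγ b a
  · rw [hdA, hdA]
    by_cases hθφ : ∀ y, θ y = φ y
    · by_cases hθγ : ∀ y, θ y = γ y
      · rw [hθγ b, sub_self, zero_smul]
      · push_neg at hθγ
        obtain ⟨y1, hy1⟩ := hθγ
        have hφγ1 : φ y1 - γ y1 ≠ 0 := by
          rw [← hθφ y1]
          exact sub_ne_zero.mpr hy1
        have hφG : ∀ (a : A), φ ((d ((0:A),b)).2) • a = 0 := by
          intro a
          have h := hstar2 y1 b a
          rw [hθφ b, sub_self, mul_zero, zero_smul] at h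
          rw [mul_smul] at h
          rcases smul_eq_zero.mp h.symm with h0 | h0
          · exact absurd h0 hφγ1
          · exact h0
        rw [hR a b, hφG a, hφG (u*a), sub_zero]
    · push_neg at hθφ
      have hz := key2 hθφ
      rw [smul_sub, hz b a, ← smul_mul_assoc, hz b u, zero_mul, sub_zero]
end

section
/- Let A be a complex Banach algebra with a right identity u, let B be a complex Banach algebra, and let θ, φ, γ be nonzero multiplicative linear functionals on B. Let d ∈ Der_J(A ×_θ^{φ,γ} B), with d_A(a) = π_A(d(a,0)) and d_B(b) = π_B(d(0,b)). Suppose that: (i) d_A is a derivation on A and d_B is a derivation on B; (ii) (θ(b) − φ(b)) d_A(a) = 0 and (θ(b) − γ(b))(d_A(a) − d_A(u)a) = 0 for all a ∈ A, b ∈ B; (iii) φ(d_B(b))(φ(y) − γ(y)) u = 0 and φ(d_B(b))(a − u a) = 0 for all a ∈ A, b,y ∈ B; (iv) φ(d_B(b)) = γ(d_B(b)) for all b ∈ B. Then d is a (θ,φ,γ)-derivation, i.e. d((a,b)·_θ(x,y)) = d(a,b)·_φ(x,y) + (a,b)·_γ d(x,y) for all a,x ∈ A and b,y ∈ B. -/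
lemma aux_smul_cancel {M : Type*} [AddCommGroup M] [Module ℂ M] {c : ℂ} {x : M}
    (hc : c ≠ 0) (h : c • x = 0) : x = 0 := by
  have h2 := congrArg (fun z => c⁻¹ • z) h
  simpa [smul_smul, inv_mul_cancel₀ hc] using h2

lemma aux_two_smul_zero {M : Type*} [AddCommGroup M] [Module ℂ M] {x : M}
    (h : x + x = 0) : x = 0 := by
  refine aux_smul_cancel (two_ne_zero (α := ℂ)) ?_
  rw [two_smul]; exact h

/-- Theorem 2.4, converse direction: a Jordan derivation-like map satisfying conditions
(i)–(iv) is a `(θ,φ,γ)`-derivation. -/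
theorem lau_derivation_of_conditions
    {A B : Type*}
    [NonUnitalNormedRing A] [NormedSpace ℂ A] [IsScalarTower ℂ A A] [SMulCommClass ℂ A A]
    [CompleteSpace A]
    [NonUnitalNormedRing B] [NormedSpace ℂ B] [IsScalarTower ℂ B B] [SMulCommClass ℂ B B]
    [CompleteSpace B]
    (u : A) (hu : ∀ a : A, a * u = a)
    (θ φ γ : B →ₗ[ℂ] ℂ)
    (hθmul : ∀ x y : B, θ (x * y) = θ x * θ y) (hθ0 : θ ≠ 0)
    (hφmul : ∀ x y : B, φ (x * y) = φ x * φ y) (hφ0 : φ ≠ 0)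
    (hγmul : ∀ x y : B, γ (x * y) = γ x * γ y) (hγ0 : γ ≠ 0)
    (d : A × B →ₗ[ℂ] A × B)
    (hd : ∀ (a : A) (b : B),
      d (lauMul θ (a, b) (a, b)) = lauMul φ (d (a, b)) (a, b) + lauMul γ (a, b) (d (a, b)))
    (dA : A → A) (hdA : ∀ a : A, dA a = (d (a, 0)).1)
    (dB : B → B) (hdB : ∀ b : B, dB b = (d (0, b)).2)
    (hi : (∀ a x : A, dA (a * x) = dA a * x + a * dA x) ∧
      (∀ b y : B, dB (b * y) = dB b * y + b * dB y))
    (hii : ∀ (a : A) (b : B),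
      (θ b - φ b) • dA a = 0 ∧ (θ b - γ b) • (dA a - dA u * a) = 0)
    (hiii : (∀ b y : B, (φ (dB b) * (φ y - γ y)) • u = 0) ∧
      (∀ (a : A) (b : B), φ (dB b) • (a - u * a) = 0))
    (hiv : ∀ b : B, φ (dB b) = γ (dB b)) :
    ∀ (a x : A) (b y : B),
      d (lauMul θ (a, b) (x, y)) = lauMul φ (d (a, b)) (x, y) + lauMul γ (a, b) (d (x, y)) := by
    -- τ(c) := (d (c,0)).2 vanishes on squares
  have hτsq : ∀ c : A, (d (c * c, 0)).2 = 0 := by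
    intro c
    have h := congrArg Prod.snd (hd c 0)
    simpa [lauMul] using h
  have hτu : (d (u, 0)).2 = 0 := by
    have h := hτsq u
    rwa [hu u] at h
  have hkey : ∀ c : A, (d (c, 0)).2 + (d (u * c, 0)).2 = 0 := by
    intro c
    have h1 := hτsq (c + u)
    rw [show (c+u)*(c+u) = c*c + c + (u*c + u) by
          rw [add_mul, mul_add, mul_add, hu c, hu u],
        show ((c*c + c + (u*c + u), (0:B)) : A × B)
            = (c*c, 0) + (c, 0) + ((u*c, 0) + (u, 0)) by simp,
        map_add, map_add, map_add] at h1
    simp only [Prod.snd_add] at h1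
    rw [hτsq c, hτu] at h1
    simpa using h1
  have hτ : ∀ c : A, (d (c, 0)).2 = 0 := by
    intro c
    have h2 := hkey (u * c)
    rw [show u * (u * c) = u * c by rw [← mul_assoc, hu u]] at h2
    have h4 : (d (u * c, 0)).2 = 0 := aux_two_smul_zero h2
    have h5 := hkey c
    rw [h4, add_zero] at h5
    exact h5
  -- opaque name for the A-component of d (0, t)
  obtain ⟨σ, hσ⟩ : ∃ σ : B → A, ∀ t, (d (0, t)).1 = σ t :=
    ⟨fun t => (d (0, t)).1, fun t => rfl⟩
  have hdA0 : dA 0 = 0 := by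
    rw [hdA, show ((0, 0) : A × B) = 0 from rfl, map_zero]; rfl
  have hσ0 : σ 0 = 0 := by
    rw [← hσ, show ((0, 0) : A × B) = 0 from rfl, map_zero]; rfl
  -- component lemmas
  have hC1 : ∀ (c : A) (t : B), (d (c, t)).1 = dA c + σ t := by
    intro c t
    rw [show ((c, t) : A × B) = (c, 0) + (0, t) by simp, map_add, Prod.fst_add, hdA, hσ]
  have hC2 : ∀ (c : A) (t : B), (d (c, t)).2 = dB t := by
    intro c t
    rw [show ((c, t) : A × B) = (c, 0) + (0, t) by simp, map_add, Prod.snd_add, hτ, hdB,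
      zero_add]
  have hdA_add : ∀ c e : A, dA (c + e) = dA c + dA e := by
    intro c e
    rw [hdA, hdA, hdA, show ((c + e, (0:B)) : A × B) = (c, 0) + (e, 0) by simp, map_add,
      Prod.fst_add]
  have hdA_smul : ∀ (s : ℂ) (c : A), dA (s • c) = s • dA c := by
    intro s c
    rw [hdA, hdA, show ((s • c, (0:B)) : A × B) = s • (c, 0) by simp, map_smul]
    rfl
  -- θ t • dA c = φ t • dA c
  have hθφ : ∀ (t : B) (c : A), θ t • dA c = φ t • dA c := by
    intro t c
    have h := (hii c t).1
    rwa [sub_smul, sub_eq_zero] at h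
  -- diagonal relation for σ
  have hE : ∀ t : B, σ (t * t) = φ t • σ t + γ t • σ t := by
    intro t
    have h := congrArg Prod.fst (hd 0 t)
    simpa [lauMul, hσ] using h
  -- the key structural relation (C3')
  have hC3 : ∀ t : B, (θ t - γ t) • dA u
      = σ t + u * σ t + u * dA u + (2 * φ (dB t)) • u := by
    intro t
    have h := congrArg Prod.fst (hd u t)
    simp only [lauMul, Prod.fst_add, hu, hσ, hC1, hC2, hdA_add, hdA_smul, hdA0, zero_add,
      add_zero, mul_add, smul_add] at h
    linear_combination (norm := module) h - hE t - hθφ t u - (hiv t) • u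
  -- now prove the statement
  intro a x b y
  have hsnd : (d (lauMul θ (a, b) (x, y))).2
      = (lauMul φ (d (a, b)) (x, y) + lauMul γ (a, b) (d (x, y))).2 := by
    simp only [lauMul, Prod.snd_add, hC2]
    exact hi.2 b y
  have hfst : (d (lauMul θ (a, b) (x, y))).1
      = (lauMul φ (d (a, b)) (x, y) + lauMul γ (a, b) (d (x, y))).1 := by
    by_cases hcase : ∀ t : B, φ (dB t) = 0
    · by_cases hθγ : ∀ t : B, θ t = γ t
      · -- Case 1a : φ∘dB = 0 and θ = γ
        have h1a : ∀ t : B, σ t + u * σ t + u * dA u = 0 := by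
          intro t
          have h := hC3 t
          rw [hθγ t, sub_self, zero_smul, hcase t] at h
          linear_combination (norm := module) -h
        have hudAu : u * dA u = 0 := by
          have h := h1a 0
          rwa [hσ0, mul_zero, zero_add, zero_add] at h
        have hfix : ∀ t : B, u * σ t = σ t := by
          intro t
          have h := h1a t
          have h2 := congrArg (fun z => u * z) (h1a t)
          simp only [mul_add, mul_zero, ← mul_assoc, hu u] at h2
          linear_combination (norm := module) h2 - h
        have hσz : ∀ t : B, σ t = 0 := by
          intro t
          have h := h1a t
          rw [hfix t, hudAu, add_zero] at h
          exact aux_two_smul_zero h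
        have hγdB : ∀ t, γ (dB t) = 0 := fun t => (hiv t) ▸ hcase t
        simp only [lauMul, Prod.fst_add, hC1, hC2, hdA_add, hdA_smul, hi.1, hσz, hcase,
          hγdB, zero_smul, smul_zero, mul_zero, zero_mul, add_zero, zero_add, mul_add,
          add_mul, smul_add]
        linear_combination (norm := module) hθφ y a + (hθγ b) • dA x
      · -- Case 1b : φ∘dB = 0 and θ ≠ γ
        push_neg at hθγ
        obtain ⟨t₀, ht₀⟩ := hθγ
        have hne : θ t₀ - γ t₀ ≠ 0 := sub_ne_zero.mpr ht₀
        have hdAu_eq : ∀ c : A, dA c = dA u * c := by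
          intro c
          exact sub_eq_zero.mp (aux_smul_cancel hne (hii c t₀).2)
        have hmul0 : ∀ c e : A, c * dA e = 0 := by
          intro c e
          have h1 := hi.1 c e
          have h3 : dA u * (c * e) = dA u * c * e := (mul_assoc _ _ _).symm
          rw [hdAu_eq (c * e), hdAu_eq c, h3] at h1
          exact left_eq_add.mp h1
        have hufix0 : ∀ t : B, u * σ t = 0 := by
          intro t
          have h := hC3 t
          rw [hcase t] at h
          have h2 := congrArg (fun z => u * z) h
          simp only [mul_add, ← mul_assoc, hu u, mul_smul_comm, hmul0, mul_zero, add_zero,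
            smul_zero, zero_add] at h2
          have h3 : u * σ t + u * σ t = 0 := by
            linear_combination (norm := module) -h2
          exact aux_two_smul_zero h3
        have hσf : ∀ t : B, σ t = (θ t - γ t) • dA u := by
          intro t
          have h := hC3 t
          rw [hcase t, hufix0 t, hmul0 u u] at h
          linear_combination (norm := module) -h
        have hγdB : ∀ t, γ (dB t) = 0 := fun t => (hiv t) ▸ hcase t
        simp only [lauMul, Prod.fst_add, hC1, hC2, hdA_add, hdA_smul, hi.1, hσf, hcase,
          hγdB, hθmul, hγmul, zero_smul, smul_zero, mul_zero, zero_mul, add_zero, zero_add,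
          mul_add, add_mul, smul_add, smul_mul_assoc, mul_smul_comm, hmul0]
        linear_combination (norm := module) hθφ y a + (θ b - γ b) • hdAu_eq x
          + (θ b - γ b) • hθφ y u
    · -- Case 2 : φ∘dB ≠ 0
      push_neg at hcase
      obtain ⟨b₀, hb₀⟩ := hcase
      have hL : ∀ c : A, u * c = c := by
        intro c
        exact (sub_eq_zero.mp (aux_smul_cancel hb₀ (hiii.2 c b₀))).symm
      have hdAu : dA u = 0 := by
        have h := hi.1 u u
        rw [hu u, hu (dA u), hL (dA u)] at h
        exact left_eq_add.mp h
      have hσf : ∀ t : B, σ t = -(φ (dB t) • u) := by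
        intro t
        have h := hC3 t
        rw [hdAu, smul_zero, hL (σ t), mul_zero, add_zero] at h
        have h2 : (σ t + φ (dB t) • u) + (σ t + φ (dB t) • u) = 0 := by
          linear_combination (norm := module) -h
        have h3 := aux_two_smul_zero h2
        linear_combination (norm := module) h3
      have hθγdA : ∀ (t : B) (c : A), θ t • dA c = γ t • dA c := by
        intro t c
        have h := (hii c t).2
        rwa [hdAu, zero_mul, sub_zero, sub_smul, sub_eq_zero] at h
      simp only [lauMul, Prod.fst_add, hC1, hC2, hdA_add, hdA_smul, hi.1, hi.2, hσf,
        map_add, hφmul, ← hiv, neg_mul, mul_neg, smul_mul_assoc, mul_smul_comm, hL, hu,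
        mul_add, add_mul, smul_add, smul_neg, add_smul]
      linear_combination (norm := module) hθφ y a + hθγdA b x - hiii.1 y b
  exact Prod.ext hfst hsnd
end

section
/- Let A be a complex Banach algebra with a right identity u but without an identity element (no two-sided unit), let B be a complex Banach algebra, and let θ, φ, γ be nonzero multiplicative linear functionals on B. If d ∈ Der_J(A ×_θ^{φ,γ} B) is moreover a (θ,φ,γ)-derivation, then, with d_A(a) = π_A(d(a,0)) and d_B(b) = π_B(d(0,b)), one has d(a,b) = (d_A(a) + (θ(b) − γ(b)) d_A(u), d_B(b)) for all a ∈ A and b ∈ B. -/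
/-- Theorem 2.4, final assertion: if `A` has no (two-sided) identity element and `d` is a
`(θ,φ,γ)`-derivation, then `d(a,b) = (d_A(a) + (θ(b) − γ(b)) d_A(u), d_B(b))`. -/
theorem lau_derivation_formula_of_no_identity
    {A B : Type*}
    [NonUnitalNormedRing A] [NormedSpace ℂ A] [IsScalarTower ℂ A A] [SMulCommClass ℂ A A]
    [CompleteSpace A]
    [NonUnitalNormedRing B] [NormedSpace ℂ B] [IsScalarTower ℂ B B] [SMulCommClass ℂ B B]
    [CompleteSpace B]
    (u : A) (hu : ∀ a : A, a * u = a)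
    (hni : ¬ ∃ e : A, ∀ a : A, e * a = a ∧ a * e = a)
    (θ φ γ : B →ₗ[ℂ] ℂ)
    (hθmul : ∀ x y : B, θ (x * y) = θ x * θ y) (hθ0 : θ ≠ 0)
    (hφmul : ∀ x y : B, φ (x * y) = φ x * φ y) (hφ0 : φ ≠ 0)
    (hγmul : ∀ x y : B, γ (x * y) = γ x * γ y) (hγ0 : γ ≠ 0)
    (d : A × B →ₗ[ℂ] A × B)
    (hd : ∀ (a : A) (b : B),
      d (lauMul θ (a, b) (a, b)) = lauMul φ (d (a, b)) (a, b) + lauMul γ (a, b) (d (a, b)))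
    (hd' : ∀ (a x : A) (b y : B),
      d (lauMul θ (a, b) (x, y)) = lauMul φ (d (a, b)) (x, y) + lauMul γ (a, b) (d (x, y)))
    (dA : A → A) (hdA : ∀ a : A, dA a = (d (a, 0)).1)
    (dB : B → B) (hdB : ∀ b : B, dB b = (d (0, b)).2)
 :
    ∀ (a : A) (b : B), d (a, b) = (dA a + (θ b - γ b) • dA u, dB b) := by
  -- u ≠ 0
  have hu0 : u ≠ 0 := by
    intro h
    apply hni
    refine ⟨0, fun a => ?_⟩
    have ha : a = 0 := by rw [← hu a, h, mul_zero]
    simp [ha]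
  -- there is x₀ with u * x₀ ≠ x₀
  obtain ⟨x₀, hx₀⟩ : ∃ x₀ : A, u * x₀ ≠ x₀ := by
    by_contra h
    push_neg at h
    exact hni ⟨u, fun a => ⟨h a, hu a⟩⟩
  have hwne : x₀ - u * x₀ ≠ 0 := sub_ne_zero.mpr (Ne.symm hx₀)
  -- splitting
  have ds : ∀ (a : A) (b : B), d (a, b) = d (a, 0) + d (0, b) := by
    intro a b
    have : ((a : A), (b : B)) = (a, (0:B)) + ((0:A), b) := by simp
    rw [this, map_add]
  -- second component of d (a, 0) vanishes
  have hL1 : ∀ a : A, (d (a, (0:B))).2 = 0 := by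
    intro a
    have h := hd' a u 0 0
    simp only [lauMul, map_zero, zero_smul, smul_zero, mul_zero, zero_mul, add_zero, zero_add,
      hu, Prod.mk_add_mk] at h
    rw [h]
  -- derivation property of the first component
  have hL2 : ∀ a x : A, (d (a * x, (0:B))).1 = (d (a, (0:B))).1 * x + a * (d (x, (0:B))).1 := by
    intro a x
    have h := hd' a x 0 0
    simp only [lauMul, map_zero, zero_smul, smul_zero, mul_zero, zero_mul, add_zero, zero_add,
      Prod.mk_add_mk] at h
    rw [h]
    simp [hL1, map_zero]
  -- a * δ u = 0
  have hL3 : ∀ a : A, a * (d (u, (0:B))).1 = 0 := by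
    intro a
    have h := hL2 a u
    rw [hu a, hu ((d (a, (0:B))).1)] at h
    exact (left_eq_add.mp h)
  -- E4
  have E4 : ∀ (b : B) (x : A),
      (d ((0:A), b)).1 * x = (θ b - γ b) • (d (x, (0:B))).1 - φ ((d ((0:A), b)).2) • x := by
    intro b x
    have h := hd' 0 x b 0
    have e1 : ((θ b • x : A), (0:B)) = θ b • ((x : A), (0:B)) := by simp
    simp only [lauMul, map_zero, zero_smul, smul_zero, mul_zero, zero_mul, add_zero, zero_add,
      Prod.mk_add_mk] at h
    rw [e1, map_smul] at h
    have h1 := congrArg Prod.fst h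
    simp only [Prod.smul_fst, Prod.fst] at h1
    linear_combination (norm := module) -h1
  -- E5
  have E5 : ∀ (y : B) (a : A),
      a * (d ((0:A), y)).1
        = (θ y - φ y) • (d (a, (0:B))).1 - γ ((d ((0:A), y)).2) • a := by
    intro y a
    have h := hd' a 0 0 y
    have e1 : ((θ y • a : A), (0:B)) = θ y • ((a : A), (0:B)) := by simp
    simp only [lauMul, map_zero, zero_smul, smul_zero, mul_zero, zero_mul, add_zero, zero_add,
      Prod.mk_add_mk] at h
    rw [e1, map_smul] at h
    have h1 := congrArg Prod.fst h
    simp only [Prod.smul_fst, Prod.fst, hL1] at h1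
    linear_combination (norm := module) -h1
  -- E6
  have E6 : ∀ b : B,
      (d ((0:A), b)).1 = (θ b - γ b) • (d (u, (0:B))).1 - φ ((d ((0:A), b)).2) • u := by
    intro b
    have := E4 b u
    rwa [hu] at this
  -- E1
  have E1 : ∀ (y : B) (a : A),
      (θ y - φ y) • (d (a, (0:B))).1
        = (γ ((d ((0:A), y)).2) - φ ((d ((0:A), y)).2)) • a := by
    intro y a
    have h1 := E5 y a
    have h2 : a * (d ((0:A), y)).1 = -(φ ((d ((0:A), y)).2) • a) := by
      rw [E6 y, mul_sub, mul_smul_comm, mul_smul_comm, hL3 a, hu a, smul_zero, zero_sub]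
    linear_combination (norm := module) h2 - h1
  -- E2
  have E2 : ∀ (b : B) (x : A),
      (θ b - γ b) • ((d (x, (0:B))).1 - (d (u, (0:B))).1 * x)
        = φ ((d ((0:A), b)).2) • (x - u * x) := by
    intro b x
    have h := E4 b x
    have h' : (d ((0:A), b)).1 * x
        = (θ b - γ b) • ((d (u, (0:B))).1 * x) - φ ((d ((0:A), b)).2) • (u * x) := by
      rw [E6 b, sub_mul, smul_mul_assoc, smul_mul_assoc]
    linear_combination (norm := module) h' - h
  -- D is a derivation on B
  have ED : ∀ b y : B, (d ((0:A), b * y)).2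
      = (d ((0:A), b)).2 * y + b * (d ((0:A), y)).2 := by
    intro b y
    have h := hd' 0 0 b y
    simp only [lauMul, map_zero, zero_smul, smul_zero, mul_zero, zero_mul, add_zero, zero_add,
      Prod.mk_add_mk] at h
    have h2 := congrArg Prod.snd h
    simpa using h2
  -- key claim: φ ∘ D = 0
  have hφD : ∀ b : B, φ ((d ((0:A), b)).2) = 0 := by
    by_cases hθφ : ∀ y : B, θ y = φ y
    · by_cases hθγ : ∀ b : B, θ b = γ b
      · intro b
        have h := E2 b x₀
        rw [sub_eq_zero.mpr (hθγ b), zero_smul] at h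
        rcases smul_eq_zero.mp h.symm with h' | h'
        · exact h'
        · exact absurd h' hwne
      · push_neg at hθγ
        obtain ⟨b₀, hb₀⟩ := hθγ
        have ht : θ b₀ - γ b₀ ≠ 0 := sub_ne_zero.mpr hb₀
        set l : ℂ := φ ((d ((0:A), b₀)).2) / (θ b₀ - γ b₀) with hl
        have hp : (d (x₀, (0:B))).1 - (d (u, (0:B))).1 * x₀ = l • (x₀ - u * x₀) := by
          have h := E2 b₀ x₀
          have := congrArg (fun z => (θ b₀ - γ b₀)⁻¹ • z) h
          rw [smul_smul, smul_smul, inv_mul_cancel₀ ht, one_smul] at this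
          rw [this, hl, div_eq_inv_mul]
        have hE3 : ∀ b : B, φ ((d ((0:A), b)).2) = l * (θ b - γ b) := by
          intro b
          have h := E2 b x₀
          rw [hp, smul_smul] at h
          have h2 : (((θ b - γ b) * l) - φ ((d ((0:A), b)).2)) • (x₀ - u * x₀) = 0 := by
            rw [sub_smul, h, sub_self]
          rcases smul_eq_zero.mp h2 with h' | h'
          · have := sub_eq_zero.mp h'
            rw [← this]; ring
          · exact absurd h' hwne
        have hpd : ∀ b y : B, φ ((d ((0:A), b * y)).2)
            = φ ((d ((0:A), b)).2) * φ y + φ b * φ ((d ((0:A), y)).2) := by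
          intro b y
          rw [ED b y, map_add, hφmul, hφmul]
        have hl0 : l = 0 := by
          have h1 := hpd b₀ b₀
          rw [hE3 (b₀ * b₀), hE3 b₀, hθmul, hγmul] at h1
          rw [← hθφ b₀] at h1
          have key : l * ((θ b₀ - γ b₀) * (θ b₀ - γ b₀)) = 0 := by linear_combination -h1
          rcases mul_eq_zero.mp key with h' | h'
          · exact h'
          · exact absurd h' (mul_ne_zero ht ht)
        intro b
        rw [hE3 b, hl0, zero_mul]
    · push_neg at hθφ
      obtain ⟨y₀, hy₀⟩ := hθφ
      have ht : θ y₀ - φ y₀ ≠ 0 := sub_ne_zero.mpr hy₀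
      set s : ℂ := (γ ((d ((0:A), y₀)).2) - φ ((d ((0:A), y₀)).2)) / (θ y₀ - φ y₀) with hs
      have hδ : ∀ a : A, (d (a, (0:B))).1 = s • a := by
        intro a
        have h := E1 y₀ a
        have := congrArg (fun z => (θ y₀ - φ y₀)⁻¹ • z) h
        rw [smul_smul, smul_smul, inv_mul_cancel₀ ht, one_smul] at this
        rw [this, hs, div_eq_inv_mul]
      have hs0 : s = 0 := by
        have h := hL2 u u
        rw [hu u] at h
        rw [hδ u] at h
        rw [smul_mul_assoc, hu u, mul_smul_comm, hu u] at h
        have h0 : s • u = 0 := left_eq_add.mp h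
        rcases smul_eq_zero.mp h0 with h' | h'
        · exact h'
        · exact absurd h' hu0
      have hδ0 : ∀ a : A, (d (a, (0:B))).1 = 0 := fun a => by rw [hδ a, hs0, zero_smul]
      intro b
      have h := E2 b x₀
      rw [hδ0 x₀, hδ0 u, zero_mul, sub_zero, smul_zero] at h
      rcases smul_eq_zero.mp h.symm with h' | h'
      · exact h'
      · exact absurd h' hwne
  -- conclusion
  intro a b
  rw [ds a b]
  have h1 : (d (a, (0:B)) + d ((0:A), b)).1 = dA a + (θ b - γ b) • dA u := by
    rw [Prod.fst_add, hdA, hdA, E6 b, hφD b, zero_smul, sub_zero]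
  have h2 : (d (a, (0:B)) + d ((0:A), b)).2 = dB b := by
    rw [Prod.snd_add, hdB, hL1 a, zero_add]
  exact Prod.ext h1 h2
end

section
/- Let A be a complex Banach algebra with an identity element u, let B be a semisimple complex Banach algebra (Jacobson radical zero), and let θ, φ be nonzero multiplicative linear functionals on B with θ ≠ φ. Then every d ∈ Der_J(A ×_θ^{φ,φ} B) is a (θ,φ,φ)-derivation; moreover for every such d one has d(a,b) = (π_A(d(0,b)), d_B(b)) with d(a,0) = 0 for all a ∈ A, where d_B(b) = π_B(d(0,b)) is a derivation on B. -/
set_option linter.unusedSectionVars false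

private lemma nc_half {M : Type*} [AddCommGroup M] [Module ℂ M] {z : M} (h : z + z = 0) : z = 0 := by
  have h2 : (2:ℂ) • z = 0 := by rw [two_smul]; exact h
  have h3 : z = (2:ℂ)⁻¹ • ((2:ℂ) • z) := by rw [smul_smul]; norm_num
  rw [h3, h2, smul_zero]

private lemma nc_smul_cancel {M : Type*} [AddCommGroup M] [Module ℂ M] {c : ℂ} (hc : c ≠ 0)
    {z : M} (h : c • z = 0) : z = 0 := by
  have h3 : z = c⁻¹ • (c • z) := by rw [smul_smul, inv_mul_cancel₀ hc, one_smul]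
  rw [h3, h, smul_zero]

section SEP
variable {B : Type*} [NonUnitalRing B] [Module ℂ B]
  (S : ∀ z : B, (∀ x : B, z * x * z = 0) → z = 0)
include S

private lemma nc_transpose {α β : B} (h : ∀ x, α * x * β = 0) : ∀ x, β * x * α = 0 := by
  intro x
  refine S _ (fun y => ?_)
  have e : β * x * α * y * (β * x * α) = β * x * (α * y * β) * (x * α) := by noncomm_ring
  rw [e, h y, mul_zero, zero_mul]

private lemma nc_sep {α β : B} (h : ∀ x, α * x * β + β * x * α = 0) : ∀ x, α * x * β = 0 := by
  have h2 : ∀ x y, α * x * α * y * β = 0 := by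
    intro x y
    have e : α * x * α * y * β + α * x * α * y * β
        = (α * x) * (α * y * β + β * y * α) - (α * x * β + β * x * α) * (y * α)
          + (α * (x * α * y) * β + β * (x * α * y) * α) := by noncomm_ring
    rw [h y, h x, h (x * α * y), mul_zero, zero_mul, sub_zero, add_zero] at e
    exact nc_half e
  intro x
  refine S _ (fun y => ?_)
  have e : (α * x * β) * y * (α * x * β)
      = (α * x) * (α * y * β + β * y * α) * (x * β) - α * x * α * y * β * (x * β) := by
    noncomm_ring
  rw [h y, h2 x y] at e
  simpa using e

private lemma nc_lin_sep {g1 g2 k1 k2 : B} (h12 : ∀ x, g1 * x * k2 + g2 * x * k1 = 0)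
    (h1 : ∀ y, k1 * y * g1 = 0) : ∀ x, g1 * x * k2 = 0 := by
  intro x
  refine S _ (fun y => ?_)
  have e : (g1 * x * k2) * y * (g1 * x * k2)
      = (g1 * x * k2 + g2 * x * k1) * (y * (g1 * x * k2))
        - (g2 * x) * (k1 * y * g1) * (x * k2) := by noncomm_ring
  rw [h12 x, h1 y] at e
  simpa using e

end SEP

private theorem nc_jordan {B : Type*} [NonUnitalRing B] [Module ℂ B]
    (S : ∀ z : B, (∀ x : B, z * x * z = 0) → z = 0)
    (T : B → B)
    (hadd : ∀ x y : B, T (x + y) = T x + T y)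
    (hsq : ∀ b : B, T (b * b) = T b * b + b * T b) :
    ∀ a b : B, T (a * b) = T a * b + a * T b := by
  have hT0 : T 0 = 0 := by
    have h := hadd 0 0
    rw [add_zero] at h
    have h2 : T 0 + 0 = T 0 + T 0 := by rw [add_zero]; exact h
    exact (add_left_cancel h2).symm
  have hneg : ∀ x : B, T (-x) = -T x := by
    intro x
    have h := hadd x (-x)
    rw [add_neg_cancel, hT0] at h
    exact (neg_eq_of_add_eq_zero_right h.symm).symm
  have hsub : ∀ x y : B, T (x - y) = T x - T y := by
    intro x y; rw [sub_eq_add_neg, hadd, hneg, sub_eq_add_neg]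
  have hJ : ∀ a b : B, T (a * b + b * a) = T a * b + a * T b + T b * a + b * T a := by
    intro a b
    have e := hsq (a + b)
    rw [hadd a b] at e
    have harg : (a + b) * (a + b) = a * a + (a * b + b * a) + b * b := by noncomm_ring
    rw [harg, hadd (a * a + (a * b + b * a)) (b * b), hadd (a * a) (a * b + b * a),
      hsq a, hsq b] at e
    rw [← sub_eq_zero]
    rw [← sub_eq_zero] at e
    conv_rhs => rw [← e]
    noncomm_ring
  have hii : ∀ a b : B, T (a * b * a) = T a * (b * a) + a * T b * a + a * b * T a := by
    intro a b
    have e := hJ a (a * b + b * a)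
    rw [hJ a b] at e
    have harg : a * (a * b + b * a) + (a * b + b * a) * a
        = a * a * b + b * (a * a) + (a * b * a + a * b * a) := by noncomm_ring
    rw [harg, hadd (a * a * b + b * (a * a)) (a * b * a + a * b * a),
      hJ (a * a) b, hsq a, hadd (a * b * a) (a * b * a)] at e
    have e2 : (T (a * b * a) - (T a * (b * a) + a * T b * a + a * b * T a))
        + (T (a * b * a) - (T a * (b * a) + a * T b * a + a * b * T a)) = 0 := by
      rw [← sub_eq_zero] at e
      conv_rhs => rw [← e]
      noncomm_ring
    exact sub_eq_zero.mp (nc_half e2)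
  have hiii : ∀ a b c : B, T (a * b * c + c * b * a)
      = T a * (b * c) + a * T b * c + a * b * T c
        + T c * (b * a) + c * T b * a + c * b * T a := by
    intro a b c
    have e := hii (a + c) b
    rw [hadd a c] at e
    have harg : (a + c) * b * (a + c) = a * b * a + c * b * c + (a * b * c + c * b * a) := by
      noncomm_ring
    rw [harg, hadd (a * b * a + c * b * c) (a * b * c + c * b * a), hadd (a * b * a) (c * b * c),
      hii a b, hii c b] at e
    rw [← sub_eq_zero]
    rw [← sub_eq_zero] at e
    conv_rhs => rw [← e]
    noncomm_ring
  have hTba : ∀ a b : B, T (b * a) = T b * a + b * T a - (T (a * b) - T a * b - a * T b) := by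
    intro a b
    have e := hJ a b
    rw [hadd (a * b) (b * a)] at e
    rw [← sub_eq_zero]
    rw [← sub_eq_zero] at e
    conv_rhs => rw [← e]
    noncomm_ring
  have hB : ∀ a b x : B,
      (T (a * b) - T a * b - a * T b) * x * (a * b - b * a)
        + (a * b - b * a) * x * (T (a * b) - T a * b - a * T b) = 0 := by
    intro a b x
    have w1 := hiii (a * b) x (b * a)
    have harg : a * b * x * (b * a) + b * a * x * (a * b)
        = a * (b * x * b) * a + b * (a * x * a) * b := by noncomm_ring
    rw [harg, hadd (a * (b * x * b) * a) (b * (a * x * a) * b),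
      hii a (b * x * b), hii b (a * x * a), hii b x, hii a x, hTba a b] at w1
    rw [← sub_eq_zero]
    rw [← sub_eq_zero] at w1
    conv_rhs => rw [← w1]
    noncomm_ring
  have hGK : ∀ a b x : B, (T (a * b) - T a * b - a * T b) * x * (a * b - b * a) = 0 :=
    fun a b => nc_sep S (hB a b)
  have hKG : ∀ a b x : B, (a * b - b * a) * x * (T (a * b) - T a * b - a * T b) = 0 :=
    fun a b => nc_transpose S (hGK a b)
  have hGK2 : ∀ a b p x : B, (T (a * b) - T a * b - a * T b) * x * (a * p - p * a) = 0 := by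
    intro a b p
    refine nc_lin_sep (g2 := T (a * p) - T a * p - a * T p) S (fun x => ?_) (hKG a b)
    have h1 := hGK a (b + p) x
    rw [mul_add a b p, add_mul b p a, hadd (a * b) (a * p), hadd b p] at h1
    have comb := congrArg₂ (· - ·) h1 (congrArg₂ (· + ·) (hGK a b x) (hGK a p x))
    rw [← sub_eq_zero]
    rw [← sub_eq_zero] at comb
    conv_rhs => rw [← comb]
    noncomm_ring
  have hKG2 : ∀ a b p x : B, (a * p - p * a) * x * (T (a * b) - T a * b - a * T b) = 0 :=
    fun a b p => nc_transpose S (hGK2 a b p)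
  have hGK3 : ∀ a b c p x : B, (T (a * b) - T a * b - a * T b) * x * (c * p - p * c) = 0 := by
    intro a b c p
    refine nc_lin_sep (g2 := T (c * b) - T c * b - c * T b) S (fun x => ?_) (hKG2 a b p)
    have h1 := hGK2 (a + c) b p x
    rw [add_mul a c b, hadd (a * b) (c * b), hadd a c, add_mul a c p, mul_add p a c] at h1
    have comb := congrArg₂ (· - ·) h1 (congrArg₂ (· + ·) (hGK2 a b p x) (hGK2 c b p x))
    rw [← sub_eq_zero]
    rw [← sub_eq_zero] at comb
    conv_rhs => rw [← comb]
    noncomm_ring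
  have hKG3 : ∀ a b c p x : B, (c * p - p * c) * x * (T (a * b) - T a * b - a * T b) = 0 :=
    fun a b c p => nc_transpose S (hGK3 a b c p)
  have hGKc : ∀ a b c p : B, (T (a * b) - T a * b - a * T b) * (c * p - p * c) = 0 := by
    intro a b c p
    refine S _ (fun y => ?_)
    have e : (T (a * b) - T a * b - a * T b) * (c * p - p * c) * y
          * ((T (a * b) - T a * b - a * T b) * (c * p - p * c))
        = (T (a * b) - T a * b - a * T b)
          * ((c * p - p * c) * y * (T (a * b) - T a * b - a * T b)) * (c * p - p * c) := by
      noncomm_ring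
    rw [hKG3 a b c p y] at e
    simpa using e
  have hKGc : ∀ a b c p : B, (c * p - p * c) * (T (a * b) - T a * b - a * T b) = 0 := by
    intro a b c p
    refine S _ (fun y => ?_)
    have e : (c * p - p * c) * (T (a * b) - T a * b - a * T b) * y
          * ((c * p - p * c) * (T (a * b) - T a * b - a * T b))
        = (c * p - p * c)
          * ((T (a * b) - T a * b - a * T b) * y * (c * p - p * c))
          * (T (a * b) - T a * b - a * T b) := by
      noncomm_ring
    rw [hGK3 a b c p y] at e
    simpa using e
  intro a b
  set g := T (a * b) - T a * b - a * T b with hg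
  set k := a * b - b * a with hk
  have R1 : ∀ y : B, g * y * g = g * g * y := by
    intro y
    have h1 := hGKc a b g y
    rw [← hg, mul_sub] at h1
    have h2 := sub_eq_zero.mp h1
    calc g * y * g = g * (y * g) := by rw [mul_assoc]
      _ = g * (g * y) := h2.symm
      _ = g * g * y := by rw [← mul_assoc]
  have hgk : g * k = 0 := by
    have h1 := hGKc a b a b
    rw [← hg, ← hk] at h1
    exact h1
  have hkg : k * g = 0 := by
    have h1 := hKGc a b a b
    rw [← hg, ← hk] at h1
    exact h1
  have hgdef : T (a * b) = g + T a * b + a * T b := by rw [hg]; abel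
  have hTbaG : T (b * a) = T b * a + b * T a - g := by rw [hg]; exact hTba a b
  have hTk : T k = g + g + (T a * b + a * T b - T b * a - b * T a) := by
    rw [hk, hsub (a * b) (b * a), hgdef, hTbaG]
    abel
  have hGm1 : g * (T a * b - b * T a) = 0 := by
    have h1 := hGKc a b (T a) b; rw [← hg] at h1; exact h1
  have hGm2 : g * (a * T b - T b * a) = 0 := by
    have h1 := hGKc a b a (T b); rw [← hg] at h1; exact h1
  have hm1G : (T a * b - b * T a) * g = 0 := by
    have h1 := hKGc a b (T a) b; rw [← hg] at h1; exact h1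
  have hm2G : (a * T b - T b * a) * g = 0 := by
    have h1 := hKGc a b a (T b); rw [← hg] at h1; exact h1
  have hgTk : g * T k = g * g + g * g := by
    rw [hTk]
    have comb := congrArg₂ (· + ·) hGm1 hGm2
    rw [← sub_eq_zero]
    rw [← sub_eq_zero] at comb
    conv_rhs => rw [← comb]
    noncomm_ring
  have hTkg : T k * g = g * g + g * g := by
    rw [hTk]
    have comb := congrArg₂ (· + ·) hm1G hm2G
    rw [← sub_eq_zero]
    rw [← sub_eq_zero] at comb
    conv_rhs => rw [← comb]
    noncomm_ring
  have E5 := hJ g k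
  have h0 : T (g * k + k * g) = 0 := by rw [hgk, hkg, add_zero, hT0]
  rw [h0, hgTk, hTkg] at E5
  have e6 : g * g * (T g * k + (g * g + g * g) + (g * g + g * g) + k * T g) = 0 := by
    rw [← E5, mul_zero]
  have X1 : g * (g * T g) * k = 0 := by
    have h1 := hGK a b (g * T g); rw [← hg, ← hk] at h1; exact h1
  have X2 : g * (g * k) * T g = 0 := by rw [hgk, mul_zero, zero_mul]
  have hsq4 : g * g * (g * g) + g * g * (g * g) + (g * g * (g * g) + g * g * (g * g)) = 0 := by
    have comb := congrArg₂ (· - ·) e6 (congrArg₂ (· + ·) X1 X2)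
    rw [← sub_eq_zero]
    rw [← sub_eq_zero] at comb
    conv_rhs => rw [← comb]
    noncomm_ring
  have hgggg : g * g * (g * g) = 0 := nc_half (nc_half hsq4)
  have hggx : ∀ x : B, g * g * x * (g * g) = 0 := by
    intro x
    calc g * g * x * (g * g) = g * (g * x) * g * g := by noncomm_ring
      _ = g * g * (g * x) * g := by rw [R1 (g * x)]
      _ = g * (g * (g * x)) * g := by noncomm_ring
      _ = g * g * (g * (g * x)) := by rw [R1 (g * (g * x))]
      _ = g * g * (g * g) * x := by noncomm_ring
      _ = 0 := by rw [hgggg, zero_mul]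
  have hgg0 : g * g = 0 := S _ hggx
  have hgxg : ∀ x : B, g * x * g = 0 := fun x => by rw [R1 x, hgg0, zero_mul]
  have hgfin : g = 0 := S _ hgxg
  rw [hg] at hgfin
  rw [sub_sub, sub_eq_zero] at hgfin
  exact hgfin

private lemma nc_semiprime {B : Type*} [NonUnitalRing B] [Module ℂ B]
    [IsScalarTower ℂ B B] [SMulCommClass ℂ B B]
    (hss : ∀ z : B,
      (∀ (c : ℂ) (b : B), ∃ y : B, y + (c • z + b * z) = y * (c • z + b * z)) → z = 0) :
    ∀ z : B, (∀ x : B, z * x * z = 0) → z = 0 := by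
  intro z hz
  apply hss z
  intro c b
  have k1 : ∀ e : B, z * (e * z) = 0 := fun e => by rw [← mul_assoc]; exact hz e
  have k2 : ∀ e f : B, z * (e * (z * f)) = 0 := by
    intro e f
    have h : z * (e * (z * f)) = z * e * z * f := by noncomm_ring
    rw [h, hz e, zero_mul]
  have h3 : (c • z + b * z) * ((c • z + b * z) * (c • z + b * z)) = 0 := by
    simp only [mul_add, add_mul, smul_mul_assoc, mul_smul_comm, smul_smul, mul_assoc, k1, k2,
      mul_zero, smul_zero, add_zero, zero_add]
  refine ⟨-((c • z + b * z) + (c • z + b * z) * (c • z + b * z)), ?_⟩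
  have h4 : (-((c • z + b * z) + (c • z + b * z) * (c • z + b * z))) * (c • z + b * z)
      = -((c • z + b * z) * (c • z + b * z)) := by
    rw [neg_mul, add_mul, mul_assoc, h3, add_zero]
  rw [h4]
  abel

private lemma lauMul_mk {A B : Type*} [NonUnitalNonAssocSemiring A] [NonUnitalNonAssocSemiring B]
    [Module ℂ A] [Module ℂ B] (ψ : B →ₗ[ℂ] ℂ) (a x : A) (b y : B) :
    lauMul ψ (a, b) (x, y) = (a * x + ψ y • a + ψ b • x, b * y) := rfl

/-- Corollary 2.5: if `A` is unital, `B` is semisimple and `θ ≠ φ`, then every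
`d ∈ Der_J(A ×_θ^{φ,φ} B)` is a `(θ,φ,φ)`-derivation, `d` vanishes on `A × {0}`,
`d(a,b) = (π_A(d(0,b)), d_B(b))`, and `d_B` is a derivation on `B`. -/
theorem lau_jordan_eq_derivation_of_semisimple
    {A B : Type*}
    [NonUnitalNormedRing A] [NormedSpace ℂ A] [IsScalarTower ℂ A A] [SMulCommClass ℂ A A]
    [CompleteSpace A]
    [NonUnitalNormedRing B] [NormedSpace ℂ B] [IsScalarTower ℂ B B] [SMulCommClass ℂ B B]
    [CompleteSpace B]
    (u : A) (hu : ∀ a : A, a * u = a) (hu' : ∀ a : A, u * a = a)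
    (hss : ∀ z : B,
      (∀ (c : ℂ) (b : B), ∃ y : B, y + (c • z + b * z) = y * (c • z + b * z)) → z = 0)
    (θ φ : B →ₗ[ℂ] ℂ)
    (hθmul : ∀ x y : B, θ (x * y) = θ x * θ y) (hθ0 : θ ≠ 0)
    (hφmul : ∀ x y : B, φ (x * y) = φ x * φ y) (hφ0 : φ ≠ 0)
    (hθφ : θ ≠ φ)
    (d : A × B →ₗ[ℂ] A × B)
    (hd : ∀ (a : A) (b : B),
      d (lauMul θ (a, b) (a, b)) = lauMul φ (d (a, b)) (a, b) + lauMul φ (a, b) (d (a, b)))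
    (dB : B → B) (hdB : ∀ b : B, dB b = (d (0, b)).2)
 :
    (∀ (a x : A) (b y : B),
      d (lauMul θ (a, b) (x, y)) = lauMul φ (d (a, b)) (x, y) + lauMul φ (a, b) (d (x, y))) ∧
    (∀ a : A, d (a, 0) = 0) ∧
    (∀ (a : A) (b : B), d (a, b) = ((d (0, b)).1, dB b)) ∧
    (∀ b y : B, dB (b * y) = dB b * y + b * dB y) := by

  obtain ⟨y₀, hy₀⟩ : ∃ y, θ y ≠ φ y := by
    by_contra hcon
    push_neg at hcon
    exact hθφ (LinearMap.ext hcon)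
  have hc' : θ y₀ - φ y₀ ≠ 0 := sub_ne_zero.mpr hy₀
  -- linearity helpers
  have hdaddA : ∀ p q : A, d (p + q, 0) = d (p, 0) + d (q, 0) := by
    intro p q
    have h : ((p + q : A), (0 : B)) = (p, 0) + (q, 0) := by rw [Prod.mk_add_mk, add_zero]
    rw [h, map_add]
  have hdsmulA : ∀ (c : ℂ) (p : A), d (c • p, 0) = c • d (p, 0) := by
    intro c p
    have h : ((c • p : A), (0 : B)) = c • ((p : A), (0 : B)) := by rw [Prod.smul_mk, smul_zero]
    rw [h, map_smul]
  have hdaddB : ∀ p q : B, d (0, p + q) = d (0, p) + d (0, q) := by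
    intro p q
    have h : ((0 : A), p + q) = ((0 : A), p) + ((0 : A), q) := by rw [Prod.mk_add_mk, add_zero]
    rw [h, map_add]
  -- A-side square identity, full pair form
  have epairA : ∀ x : A, d (x * x, 0)
      = ((d (x, 0)).1 * x + φ ((d (x, 0)).2) • x, 0)
        + (x * (d (x, 0)).1 + φ ((d (x, 0)).2) • x, 0) := by
    intro x
    have e := hd x 0
    rw [show d (x, 0) = ((d (x, 0)).1, (d (x, 0)).2) from (Prod.mk.eta).symm] at e
    rw [lauMul_mk, lauMul_mk, lauMul_mk] at e
    simp only [map_zero, zero_smul, add_zero, zero_add, mul_zero, zero_mul, smul_zero] at e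
    exact e
  have hsq2 : ∀ x : A, (d (x * x, 0)).2 = 0 := by
    intro x
    have e := congrArg Prod.snd (epairA x)
    simpa using e
  have hSA : ∀ x : A, (d (x, 0)).2 = 0 := by
    intro a
    have h1 := hsq2 (a + u)
    have harg : (a + u) * (a + u) = a * a + u * u + (a + a) := by
      rw [mul_add, add_mul, add_mul, hu a, hu' a]; abel
    rw [harg, hdaddA (a * a + u * u) (a + a), hdaddA (a * a) (u * u), hdaddA a a] at h1
    simp only [Prod.snd_add] at h1
    rw [hsq2 a, hsq2 u] at h1
    simp only [zero_add] at h1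
    exact nc_half h1
  have hP2 : ∀ x : A, (d (x * x, 0)).1 = (d (x, 0)).1 * x + x * (d (x, 0)).1 := by
    intro x
    have e := congrArg Prod.fst (epairA x)
    simp only [Prod.fst_add] at e
    rw [hSA x] at e
    simpa [map_zero, zero_smul, add_zero] using e
  -- B-side square identity
  have epairB : ∀ b : B, d (0, b * b)
      = (φ b • (d (0, b)).1, (d (0, b)).2 * b) + (φ b • (d (0, b)).1, b * (d (0, b)).2) := by
    intro b
    have e := hd 0 b
    rw [show d (0, b) = ((d (0, b)).1, (d (0, b)).2) from (Prod.mk.eta).symm] at e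
    rw [lauMul_mk, lauMul_mk, lauMul_mk] at e
    simp only [map_zero, zero_smul, add_zero, zero_add, mul_zero, zero_mul, smul_zero] at e
    exact e
  have hQsq : ∀ b : B, (d (0, b * b)).1 = φ b • (d (0, b)).1 + φ b • (d (0, b)).1 := by
    intro b
    have e := congrArg Prod.fst (epairB b)
    simpa using e
  have hTsq : ∀ b : B, (d (0, b * b)).2 = (d (0, b)).2 * b + b * (d (0, b)).2 := by
    intro b
    have e := congrArg Prod.snd (epairB b)
    simpa using e
  -- pair decomposition using hSA
  have hd_pair : ∀ (p : A) (q : B), d (p, q) = ((d (p, 0)).1 + (d (0, q)).1, (d (0, q)).2) := by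
    intro p q
    have h : ((p : A), q) = (p, 0) + (0, q) := by rw [Prod.mk_add_mk, add_zero, zero_add]
    rw [h, map_add]
    refine Prod.ext ?_ ?_
    · simp [Prod.fst_add]
    · simp [Prod.snd_add, hSA p]
  -- the mixed identity
  have hMix : ∀ (a : A) (y : B),
      θ y • (d (a, 0)).1 + θ y • (d (a, 0)).1
        = (d (0, y)).1 * a + a * (d (0, y)).1 + φ y • (d (a, 0)).1 + φ y • (d (a, 0)).1
          + φ ((d (0, y)).2) • a + φ ((d (0, y)).2) • a := by
    intro a y
    have e := hd a y
    rw [lauMul_mk] at e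
    have hsplit : ((a * a + θ y • a + θ y • a : A), (y * y : B))
        = ((a * a : A), (0 : B)) + ((θ y • a : A), (0 : B)) + ((θ y • a : A), (0 : B))
          + ((0 : A), (y * y : B)) := by
      simp [Prod.mk_add_mk]
    rw [hsplit, map_add, map_add, map_add, hdsmulA (θ y) a, hd_pair a y, lauMul_mk, lauMul_mk] at e
    have eF := congrArg Prod.fst e
    simp only [Prod.fst_add, Prod.smul_fst] at eF
    rw [hP2 a, hQsq y] at eF
    simp only [add_mul, mul_add, smul_add] at eF
    rw [← sub_eq_zero]
    rw [← sub_eq_zero] at eF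
    conv_rhs => rw [← eF]
    module
  -- value of Q on elements, using a = u
  have hEu : ∀ y : B,
      θ y • (d (u, 0)).1 + θ y • (d (u, 0)).1
        = (d (0, y)).1 + (d (0, y)).1 + φ y • (d (u, 0)).1 + φ y • (d (u, 0)).1
          + φ ((d (0, y)).2) • u + φ ((d (0, y)).2) • u := by
    intro y
    have e := hMix u y
    rw [hu ((d (0, y)).1), hu' ((d (0, y)).1)] at e
    exact e
  -- 2 P a = v a + a v
  have hP : ∀ a : A, (2 : ℂ) • (d (a, 0)).1 = (d (u, 0)).1 * a + a * (d (u, 0)).1 := by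
    intro a
    have e1 := hMix a y₀
    have e2 := hEu y₀
    have e3 := congrArg (· * a) e2
    simp only [add_mul, smul_mul_assoc] at e3
    rw [hu' a] at e3
    have e4 := congrArg (a * ·) e2
    simp only [mul_add, mul_smul_comm] at e4
    rw [hu a] at e4
    have key : (θ y₀ - φ y₀) • ((2 : ℂ) • (d (a, 0)).1
          - ((d (u, 0)).1 * a + a * (d (u, 0)).1))
        + (θ y₀ - φ y₀) • ((2 : ℂ) • (d (a, 0)).1
          - ((d (u, 0)).1 * a + a * (d (u, 0)).1)) = 0 := by
      have comb := congrArg₂ (· - ·) (congrArg₂ (· + ·) e1 e1) (congrArg₂ (· + ·) e3 e4)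
      rw [← sub_eq_zero] at comb
      conv_rhs => rw [← comb]
      module
    exact sub_eq_zero.mp (nc_smul_cancel hc' (nc_half key))
  -- v = 0
  have hava : ∀ a : A, a * (d (u, 0)).1 * a + a * (d (u, 0)).1 * a = 0 := by
    intro a
    have K1 := hP (a * a)
    have K2 : (2 : ℂ) • (d (a * a, 0)).1
        = ((d (u, 0)).1 * a + a * (d (u, 0)).1) * a
          + a * ((d (u, 0)).1 * a + a * (d (u, 0)).1) := by
      rw [hP2 a, smul_add, ← smul_mul_assoc, ← mul_smul_comm, hP a]
    have E := (K1.symm.trans K2).symm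
    rw [← sub_eq_zero]
    rw [← sub_eq_zero] at E
    conv_rhs => rw [← E]
    noncomm_ring
  have hv : (d (u, 0)).1 = 0 := by
    have h := hava u
    rw [hu' ((d (u, 0)).1), hu ((d (u, 0)).1)] at h
    exact nc_half h
  have hP0 : ∀ a : A, (d (a, 0)).1 = 0 := by
    intro a
    have h := hP a
    rw [hv, zero_mul, mul_zero, add_zero] at h
    exact nc_smul_cancel two_ne_zero h
  have dzero : ∀ a : A, d (a, 0) = 0 := by
    intro a
    refine Prod.ext ?_ ?_
    · simpa using hP0 a
    · simpa using hSA a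
  have hdab : ∀ (p : A) (q : B), d (p, q) = ((d (0, q)).1, (d (0, q)).2) := by
    intro p q
    rw [hd_pair p q, hP0 p, zero_add]
  -- Q in terms of T
  have hQ : ∀ y : B, (d (0, y)).1 = -(φ ((d (0, y)).2) • u) := by
    intro y
    have e := hEu y
    rw [hv] at e
    simp only [smul_zero, zero_add, add_zero] at e
    have e2 : ((d (0, y)).1 + φ ((d (0, y)).2) • u) + ((d (0, y)).1 + φ ((d (0, y)).2) • u)
        = 0 := by
      have e' := e.symm
      rw [← sub_eq_zero] at e'
      conv_rhs => rw [← e']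
      module
    exact eq_neg_of_add_eq_zero_left (nc_half e2)
  -- semiprimeness and Jordan-derivation machinery on B
  have S := nc_semiprime hss
  have hTadd : ∀ p q : B, (d (0, p + q)).2 = (d (0, p)).2 + (d (0, q)).2 := by
    intro p q
    rw [hdaddB p q, Prod.snd_add]
  have hTder : ∀ b y : B, (d (0, b * y)).2 = (d (0, b)).2 * y + b * (d (0, y)).2 :=
    nc_jordan S (fun t => (d (0, t)).2) hTadd hTsq
  refine ⟨?_, dzero, ?_, ?_⟩
  · intro a x b y
    rw [lauMul_mk, hdab (a * x + θ y • a + θ b • x) (b * y), hdab a b, hdab x y,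
      lauMul_mk, lauMul_mk, Prod.mk_add_mk]
    refine Prod.ext ?_ ?_
    · dsimp only
      rw [hQ (b * y), hTder b y, hQ b, hQ y]
      simp only [map_add, hφmul, mul_neg, neg_mul, smul_neg, smul_mul_assoc, mul_smul_comm,
        smul_smul, add_smul, hu' x, hu a]
      module
    · dsimp only
      exact hTder b y
  · intro a b
    rw [hdab a b, hdB b]
  · intro b y
    rw [hdB, hdB, hdB]
    exact hTder b y
end

section
/- Let A be a complex Banach algebra with a right identity u, let B be a complex Banach algebra, and let θ, φ, γ, η₁, η₂ be nonzero multiplicative linear functionals on B. If d ∈ Der_J(A ×_θ^{φ,γ} B) is (η₁,η₂)-centralizing, then d_A(a) = π_A(d(a,0)) is a centralizing map on A (i.e. [d_A(a), a] ∈ Z(A) for all a ∈ A) and d_B(b) = π_B(d(0,b)) is a centralizing map on B (i.e. [d_B(b), b] ∈ Z(B) for all b ∈ B). -/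
/-- If `d ∈ Der_J(A ×_θ^{φ,γ} B)` is `(η₁,η₂)`-centralizing, then `d_A` is centralizing
on `A` and `d_B` is centralizing on `B`. -/
theorem lau_jordan_centralizing_components
    {A B : Type*}
    [NonUnitalNormedRing A] [NormedSpace ℂ A] [IsScalarTower ℂ A A] [SMulCommClass ℂ A A]
    [CompleteSpace A]
    [NonUnitalNormedRing B] [NormedSpace ℂ B] [IsScalarTower ℂ B B] [SMulCommClass ℂ B B]
    [CompleteSpace B]
    (u : A) (hu : ∀ a : A, a * u = a)
    (θ φ γ : B →ₗ[ℂ] ℂ)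
    (hθmul : ∀ x y : B, θ (x * y) = θ x * θ y) (hθ0 : θ ≠ 0)
    (hφmul : ∀ x y : B, φ (x * y) = φ x * φ y) (hφ0 : φ ≠ 0)
    (hγmul : ∀ x y : B, γ (x * y) = γ x * γ y) (hγ0 : γ ≠ 0)
    (η₁ η₂ : B →ₗ[ℂ] ℂ)
    (hη₁mul : ∀ x y : B, η₁ (x * y) = η₁ x * η₁ y) (hη₁0 : η₁ ≠ 0)
    (hη₂mul : ∀ x y : B, η₂ (x * y) = η₂ x * η₂ y) (hη₂0 : η₂ ≠ 0)
    (d : A × B →ₗ[ℂ] A × B)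
    (hd : ∀ (a : A) (b : B),
      d (lauMul θ (a, b) (a, b)) = lauMul φ (d (a, b)) (a, b) + lauMul γ (a, b) (d (a, b)))
    (hcen : ∀ (a : A) (b : B),
      (lauMul η₁ (d (a, b)) (a, b) - lauMul η₂ (a, b) (d (a, b))).1 ∈ Set.center A ∧
      (lauMul η₁ (d (a, b)) (a, b) - lauMul η₂ (a, b) (d (a, b))).2 ∈ Set.center B)
    (dA : A → A) (hdA : ∀ a : A, dA a = (d (a, 0)).1)
    (dB : B → B) (hdB : ∀ b : B, dB b = (d (0, b)).2)
 :
    (∀ a : A, dA a * a - a * dA a ∈ Set.center A) ∧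
    (∀ b : B, dB b * b - b * dB b ∈ Set.center B) := by

  -- Step 1: the second component of d vanishes on squares (a*a, 0).
  have hsq : ∀ a : A, (d (a * a, 0)).2 = 0 := by
    intro a
    have h := hd a 0
    have h1 : lauMul θ ((a : A), (0 : B)) (a, 0) = (a * a, 0) := by
      simp [lauMul]
    rw [h1] at h
    have h2 := congrArg Prod.snd h
    simpa [lauMul] using h2
  -- Step 2: it vanishes on symmetrized products.
  have hcross : ∀ x y : A, (d (x * y + y * x, 0)).2 = 0 := by
    intro x y
    have h1 := hsq (x + y)
    have h2 : (((x + y) * (x + y) : A), (0 : B)) =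
        ((x * x, 0) : A × B) + (x * y + y * x, 0) + (y * y, 0) := by
      simp [Prod.ext_iff]; noncomm_ring
    rw [h2, map_add, map_add] at h1
    simpa [hsq x, hsq y] using h1
  -- Step 3: using the right identity, the second component of d (a, 0) is 0.
  have hf0 : ∀ a : A, (d (a, 0)).2 = 0 := by
    intro a
    have h1 := hcross a u
    rw [hu a] at h1
    have h2 := hcross (u * a) u
    rw [hu (u * a)] at h2
    have h3 : u * (u * a) = u * a := by rw [← mul_assoc, hu u]
    rw [h3] at h2
    have h4 : (d (u * a, 0)).2 = 0 := by
      have he : ((u * a + u * a : A), (0 : B)) = ((2 : ℂ) • ((u * a, 0) : A × B)) := by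
        simp [Prod.ext_iff, two_smul]
      rw [he, map_smul] at h2
      have h5 : (2 : ℂ) • (d (u * a, 0)).2 = 0 := by simpa using h2
      have := smul_eq_zero.mp h5
      simpa using this.resolve_left (by norm_num)
    have h6 : ((a + u * a : A), (0 : B)) = ((a, 0) : A × B) + (u * a, 0) := by
      simp [Prod.ext_iff]
    rw [h6, map_add] at h1
    simpa [h4] using h1
  constructor
  · intro a
    have h := (hcen a 0).1
    have hA : (d (a, 0)).2 = 0 := hf0 a
    rw [hdA a]
    simpa [lauMul, hA, sub_eq_add_neg] using h
  · intro b
    have h := (hcen 0 b).2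
    rw [hdB b]
    simpa [lauMul] using h
end

section
/- Let A be a complex Banach algebra with a right identity u, let B be a complex Banach algebra, and let θ, φ, γ be nonzero multiplicative linear functionals on B. If d ∈ Der_J(A ×_θ^{φ,γ} B), with d_A(a) = π_A(d(a,0)), then for all a, x ∈ A and b ∈ B one has (2θ(b) − φ(b) − γ(b)) · x · d_A(a) = 0. -/
/-- Equation (9) in Corollary 2.3: `(2θ(b) − φ(b) − γ(b)) x d_A(a) = 0` for all
`a, x ∈ A` and `b ∈ B`. -/
theorem lau_jordan_annihilation
    {A B : Type*}
    [NonUnitalNormedRing A] [NormedSpace ℂ A] [IsScalarTower ℂ A A] [SMulCommClass ℂ A A]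
    [CompleteSpace A]
    [NonUnitalNormedRing B] [NormedSpace ℂ B] [IsScalarTower ℂ B B] [SMulCommClass ℂ B B]
    [CompleteSpace B]
    (u : A) (hu : ∀ a : A, a * u = a)
    (θ φ γ : B →ₗ[ℂ] ℂ)
    (hθmul : ∀ x y : B, θ (x * y) = θ x * θ y) (hθ0 : θ ≠ 0)
    (hφmul : ∀ x y : B, φ (x * y) = φ x * φ y) (hφ0 : φ ≠ 0)
    (hγmul : ∀ x y : B, γ (x * y) = γ x * γ y) (hγ0 : γ ≠ 0)
    (d : A × B →ₗ[ℂ] A × B)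
    (hd : ∀ (a : A) (b : B),
      d (lauMul θ (a, b) (a, b)) = lauMul φ (d (a, b)) (a, b) + lauMul γ (a, b) (d (a, b)))
    (dA : A → A) (hdA : ∀ a : A, dA a = (d (a, 0)).1)
 :
    ∀ (a x : A) (b : B), (2 * θ b - φ b - γ b) • (x * dA a) = 0 := by
  intro a x b
  by_cases hu0 : u = 0
  · have hx : x = 0 := by rw [← hu x, hu0, mul_zero]
    rw [hx, zero_mul, smul_zero]
  -- Main case: u ≠ 0
  -- F3 : second component of d(z²,0) vanishes
  have F3 : ∀ z : A, (d (z * z, (0:B))).2 = 0 := by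
    intro z
    have h := congrArg Prod.snd (hd z 0)
    simp only [lauMul, map_zero, zero_smul, smul_zero, mul_zero, zero_mul, add_zero, zero_add,
      Prod.snd_add, Prod.fst_add] at h
    exact h
  -- F2 : Jordan-type identity for the first component
  have F2 : ∀ z y : A, (d (z*y + y*z, (0:B))).1
      = (d (z,(0:B))).1 * y + y * (d (z,(0:B))).1 + (d (y,(0:B))).1 * z + z * (d (y,(0:B))).1
        + (φ ((d (z,(0:B))).2) + γ ((d (z,(0:B))).2)) • y
        + (φ ((d (y,(0:B))).2) + γ ((d (y,(0:B))).2)) • z := by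
    intro z y
    have h1 := congrArg Prod.fst (hd (z+y) 0)
    have h2 := congrArg Prod.fst (hd z 0)
    have h3 := congrArg Prod.fst (hd y 0)
    simp only [lauMul, map_zero, zero_smul, smul_zero, mul_zero, zero_mul, add_zero, zero_add,
      Prod.fst_add, Prod.snd_add] at h1 h2 h3
    have e : ((z+y)*(z+y), (0:B)) = (z*z, (0:B)) + (z*y + y*z, (0:B)) + (y*y, (0:B)) := by
      rw [Prod.mk_add_mk, Prod.mk_add_mk, Prod.mk.injEq]
      exact ⟨by noncomm_ring, by simp⟩
    have hzy : ((z+y : A), (0:B)) = ((z:A),(0:B)) + ((y:A),(0:B)) := by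
      rw [Prod.mk_add_mk]; simp
    rw [e, hzy, map_add, map_add, map_add] at h1
    simp only [Prod.fst_add, Prod.snd_add, map_add, add_mul, mul_add, smul_add, add_smul] at h1
    linear_combination (norm := module) h1 - h2 - h3
  -- F1 : the mixed identity  t • D z = v z + z v + m • z
  have F1 : ∀ z : A, (2 * θ b - φ b - γ b) • (d (z,(0:B))).1
      = (d ((0:A),b)).1 * z + z * (d ((0:A),b)).1
        + (φ ((d ((0:A),b)).2) + γ ((d ((0:A),b)).2)) • z := by
    intro z
    have h1 := congrArg Prod.fst (hd z b)
    have h2 := congrArg Prod.fst (hd z 0)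
    have h3 := congrArg Prod.fst (hd 0 b)
    simp only [lauMul, map_zero, zero_smul, smul_zero, mul_zero, zero_mul, add_zero, zero_add,
      Prod.fst_add, Prod.snd_add] at h1 h2 h3
    have e1 : ((z*z + θ b • z + θ b • z : A), b*b)
        = ((z*z, (0:B)) : A × B) + θ b • ((z:A),(0:B)) + θ b • ((z:A),(0:B)) + ((0:A), b*b) := by
      simp [Prod.ext_iff]
    have e2 : ((z:A), b) = ((z:A),(0:B)) + ((0:A), b) := by simp
    rw [e1, e2] at h1
    simp only [map_add, map_smul, Prod.fst_add, Prod.snd_add, Prod.smul_fst, map_add,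
      add_mul, mul_add, smul_add, add_smul] at h1
    linear_combination (norm := module) h1 - h2 - h3
  -- h8 : the fully-polarized consequence
  have h8 : ∀ X Y : A,
      (2:ℂ) • (X*((d ((0:A),b)).1*Y)) + (2:ℂ) • (Y*((d ((0:A),b)).1*X))
      + (φ ((d ((0:A),b)).2) + γ ((d ((0:A),b)).2)) • (X*Y)
      + (φ ((d ((0:A),b)).2) + γ ((d ((0:A),b)).2)) • (Y*X)
      + ((2 * θ b - φ b - γ b) * (φ ((d (X,(0:B))).2) + γ ((d (X,(0:B))).2))) • Y
      + ((2 * θ b - φ b - γ b) * (φ ((d (Y,(0:B))).2) + γ ((d (Y,(0:B))).2))) • X = 0 := by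
    intro X Y
    have k1 := F1 (X*Y + Y*X)
    have k2 := F2 X Y
    have r1 := congrArg (fun z => z * Y) (F1 X)
    have r2 := congrArg (fun z => Y * z) (F1 X)
    have r3 := congrArg (fun z => z * X) (F1 Y)
    have r4 := congrArg (fun z => X * z) (F1 Y)
    simp only [mul_add, add_mul, mul_assoc, smul_mul_assoc, mul_smul_comm, smul_add,
      add_smul, smul_smul] at k1 r1 r2 r3 r4
    linear_combination (norm := module) k1 - (2 * θ b - φ b - γ b) • k2 - r1 - r2 - r3 - r4
  -- uv is a scalar multiple of u
  have huv : u * (d ((0:A),b)).1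
      = (-( (φ ((d ((0:A),b)).2) + γ ((d ((0:A),b)).2))
          + (2*θ b - φ b - γ b) * (φ ((d (u,(0:B))).2) + γ ((d (u,(0:B))).2)) ) / 2) • u := by
    have k := h8 u u
    rw [hu ((d ((0:A),b)).1), hu u] at k
    linear_combination (norm := module) (4⁻¹ : ℂ) • k
  have h13 : ∀ X Y : A, (2:ℂ) • (Y*(X*(d ((0:A),b)).1))
      + (φ ((d ((0:A),b)).2) + γ ((d ((0:A),b)).2)) • (Y*X)
      + ((2*θ b - φ b - γ b) * (φ ((d (X,(0:B))).2) + γ ((d (X,(0:B))).2))) • Y = 0 := by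
    intro X Y
    have k := h8 X u
    rw [hu ((d ((0:A),b)).1), hu X] at k
    rw [← mul_assoc u ((d ((0:A),b)).1) X, huv, smul_mul_assoc] at k
    have ky := congrArg (fun z => Y * z) k
    simp only [mul_add, mul_smul_comm, mul_zero, smul_smul] at ky
    rw [← mul_assoc Y u X, hu Y] at ky
    linear_combination (norm := module) ky
  have h15 : ∀ X Y : A,
      ((2*θ b - φ b - γ b) * (φ ((d (X,(0:B))).2) + γ ((d (X,(0:B))).2))) • (Y*X) = 0 := by
    intro X Y
    have k1 := h13 (X*X) Y
    rw [F3 X] at k1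
    simp only [map_zero, add_zero, mul_zero, zero_smul] at k1
    have k2 := h13 X (Y*X)
    simp only [mul_assoc] at k1 k2 ⊢
    linear_combination (norm := module) k2 - k1
  have hLu : (2*θ b - φ b - γ b) * (φ ((d (u,(0:B))).2) + γ ((d (u,(0:B))).2)) = 0 := by
    have k := h15 u u
    rw [hu u] at k
    rcases smul_eq_zero.mp k with h | h
    · exact h
    · exact absurd h hu0
  have hLuv : ∀ z : A,
      ((2*θ b - φ b - γ b) * (φ ((d (u,(0:B))).2) + γ ((d (u,(0:B))).2))) • z = 0 := by
    intro z; rw [hLu, zero_smul]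
  have hLX : ∀ X : A,
      (2*θ b - φ b - γ b) * (φ ((d (X,(0:B))).2) + γ ((d (X,(0:B))).2)) = 0 := by
    intro X
    have e : ((X+u:A),(0:B)) = ((X:A),(0:B)) + ((u:A),(0:B)) := by
      rw [Prod.mk_add_mk]; simp
    have k := h15 (X+u) u
    rw [e, map_add, mul_add u X u, hu u] at k
    simp only [Prod.snd_add, map_add] at k
    have k2 := h15 X u
    have k3 : ((2*θ b - φ b - γ b) * (φ ((d (X,(0:B))).2) + γ ((d (X,(0:B))).2))) • u = 0 := by
      linear_combination (norm := module) k - k2 - hLuv (u*X) - hLuv u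
    rcases smul_eq_zero.mp k3 with h | h
    · exact h
    · exact absurd h hu0
  have hE : ∀ X Y : A, (2:ℂ) • (Y*(X*(d ((0:A),b)).1))
      + (φ ((d ((0:A),b)).2) + γ ((d ((0:A),b)).2)) • (Y*X) = 0 := by
    intro X Y
    have k := h13 X Y
    rw [hLX X, zero_smul, add_zero] at k
    exact k
  have hyv : ∀ Y : A, (2:ℂ) • (Y*(d ((0:A),b)).1)
      + (φ ((d ((0:A),b)).2) + γ ((d ((0:A),b)).2)) • Y = 0 := by
    intro Y
    have k := hE u Y
    rw [← mul_assoc Y u ((d ((0:A),b)).1), hu Y] at k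
    exact k
  rw [hdA a]
  have k1 := congrArg (fun z => x * z) (F1 a)
  simp only [mul_add, mul_smul_comm] at k1
  rw [← mul_assoc x ((d ((0:A),b)).1) a, ← mul_assoc x a ((d ((0:A),b)).1)] at k1
  have k3 := congrArg (fun z => z * a) (hyv x)
  simp only [add_mul, smul_mul_assoc, zero_mul] at k3
  have k4 := hyv (x*a)
  linear_combination (norm := module) k1 + (2⁻¹:ℂ) • k3 + (2⁻¹:ℂ) • k4
end

section
/- Let B be a complex Banach algebra and let θ, φ, γ be nonzero multiplicative linear functionals on B. If 2θ(b) = φ(b) + γ(b) for all b ∈ B, then θ = φ = γ. -/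
/-- If `2θ = φ + γ` for nonzero multiplicative linear functionals on a Banach algebra `B`,
then `θ = φ = γ`. -/
theorem mlf_eq_of_two_theta_eq_add
    {B : Type*}
    [NonUnitalNormedRing B] [NormedSpace ℂ B] [IsScalarTower ℂ B B] [SMulCommClass ℂ B B]
    [CompleteSpace B]
    (θ φ γ : B →ₗ[ℂ] ℂ)
    (hθmul : ∀ x y : B, θ (x * y) = θ x * θ y) (hθ0 : θ ≠ 0)
    (hφmul : ∀ x y : B, φ (x * y) = φ x * φ y) (hφ0 : φ ≠ 0)
    (hγmul : ∀ x y : B, γ (x * y) = γ x * γ y) (hγ0 : γ ≠ 0)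
    (h : ∀ b : B, 2 * θ b = φ b + γ b) :
    θ = φ ∧ θ = γ := by
  have hfg : φ = γ := by
    ext x
    have hsq : (φ x - γ x) ^ 2 = 0 := by
      linear_combination (-2 : ℂ) * (h (x * x)) + 4 * (hθmul x x) - 2 * (hφmul x x)
        - 2 * (hγmul x x) + (2 * θ x + φ x + γ x) * (h x)
    exact sub_eq_zero.mp ((pow_eq_zero_iff two_ne_zero).mp hsq)
  have hθφ : θ = φ := by
    ext b
    have hb := h b
    rw [← hfg] at hb
    linear_combination hb / 2
  exact ⟨hθφ, hθφ.trans hfg⟩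
end

section
/- Let A be a complex Banach algebra with a right identity u, let B be a complex Banach algebra, and let θ, φ, γ be nonzero multiplicative linear functionals on B. Let d ∈ Der_J(A ×_θ^{φ,γ} B) and write d(u,0) = (z,0). Then for every b ∈ B, writing d(0,b) = (x₁, y₁), one has x₁ = (2θ(b) − φ(b) − γ(b)) z − (1/2)(φ(y₁) + γ(y₁)) u; in particular u x₁ = −(1/2)(φ(y₁) + γ(y₁)) u. -/
/-- Equations (3)–(4): writing `d(u,0) = (z,0)` and `d(0,b) = (x₁,y₁)`, one has
`x₁ = (2θ(b) − φ(b) − γ(b)) z − (1/2)(φ(y₁) + γ(y₁)) u` and, in particular,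
`u x₁ = −(1/2)(φ(y₁) + γ(y₁)) u`. -/
theorem lau_jordan_value_on_B
    {A B : Type*}
    [NonUnitalNormedRing A] [NormedSpace ℂ A] [IsScalarTower ℂ A A] [SMulCommClass ℂ A A]
    [CompleteSpace A]
    [NonUnitalNormedRing B] [NormedSpace ℂ B] [IsScalarTower ℂ B B] [SMulCommClass ℂ B B]
    [CompleteSpace B]
    (u : A) (hu : ∀ a : A, a * u = a)
    (θ φ γ : B →ₗ[ℂ] ℂ)
    (hθmul : ∀ x y : B, θ (x * y) = θ x * θ y) (hθ0 : θ ≠ 0)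
    (hφmul : ∀ x y : B, φ (x * y) = φ x * φ y) (hφ0 : φ ≠ 0)
    (hγmul : ∀ x y : B, γ (x * y) = γ x * γ y) (hγ0 : γ ≠ 0)
    (d : A × B →ₗ[ℂ] A × B)
    (hd : ∀ (a : A) (b : B),
      d (lauMul θ (a, b) (a, b)) = lauMul φ (d (a, b)) (a, b) + lauMul γ (a, b) (d (a, b)))
 :
    ∀ b : B,
      (d (0, b)).1 = (2 * θ b - φ b - γ b) • (d (u, 0)).1
        - ((1 / 2 : ℂ) * (φ (d (0, b)).2 + γ (d (0, b)).2)) • u ∧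
      u * (d (0, b)).1 = (-(1 / 2 : ℂ) * (φ (d (0, b)).2 + γ (d (0, b)).2)) • u := by
  intro b
  set z : A := (d (u, 0)).1 with hz
  set w : B := (d (u, 0)).2 with hw
  set x : A := (d (0, b)).1 with hx
  set y : B := (d (0, b)).2 with hy
  have hD0 : d (u, 0) = (z, w) := rfl
  have hDb : d (0, b) = (x, y) := rfl
  -- Step 1: analyze hd u 0
  have E0 := hd u 0
  rw [hD0] at E0
  simp only [lauMul, map_zero, zero_smul, add_zero, zero_add, mul_zero, zero_mul,
    smul_zero, hu, Prod.mk_add_mk] at E0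
  rw [hD0, Prod.mk.injEq] at E0
  have w0 : w = 0 := E0.2
  have uz : u * z = 0 := by
    have h1 := E0.1
    rw [w0] at h1
    simp only [map_zero, zero_smul, add_zero] at h1
    -- h1 : z = z + u * z  (or similar)
    have := h1.symm
    rwa [add_eq_left] at this
  -- Step 2: the polarized identity
  have hub : ((u, b) : A × B) = (u, 0) + (0, b) := by simp
  have harg : lauMul θ ((u : A), b) (u, b)
      = lauMul θ (u, 0) (u, 0) + (2 * θ b) • ((u : A), (0 : B)) + lauMul θ (0, b) (0, b) := by
    simp only [lauMul, map_zero, zero_smul, add_zero, zero_add, mul_zero, zero_mul, smul_zero,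
      Prod.smul_mk, Prod.mk_add_mk, Prod.mk.injEq]
    constructor
    · rw [mul_smul, two_smul]; abel
    · simp
  have Eub := hd u b
  rw [harg, map_add, map_add, map_smul, hd u 0, hd 0 b, hub, map_add, hD0, hDb] at Eub
  -- take first components
  have Ef := congrArg Prod.fst Eub
  simp only [lauMul, Prod.fst_add, Prod.smul_fst, Prod.mk_add_mk, map_add, map_zero, zero_smul,
    add_zero, zero_add, mul_zero, zero_mul, smul_zero, hu, w0, mul_add, smul_add, uz] at Ef
  -- Ef should now be the key equation (*)
  -- (*) : (2*θ b) • z = x + φ b • z + γ b • z + (φ y + γ y) • u + u * x   (up to arrangement)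
  have star : (2 * θ b) • z = x + u * x + φ b • z + γ b • z + (φ y + γ y) • u := by
    rw [add_smul]
    linear_combination (norm := module) Ef
  -- multiply star on the left by u
  have ustar : (0 : A) = u * x + u * x + (φ y + γ y) • u := by
    have h2 := congrArg (fun t => u * t) star
    simp only [mul_add, mul_smul_comm, uz, smul_zero, add_zero, zero_add, ← mul_assoc, hu,
      hu u] at h2
    -- u * (u * x) = (u*u)*x = u*x handled by ← mul_assoc and hu
    linear_combination (norm := module) h2
  have ux : u * x = (-(1 / 2 : ℂ) * (φ y + γ y)) • u := by
    have h3 : (2 : ℂ) • (u * x) = -((φ y + γ y) • u) := by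
      linear_combination (norm := module) ustar.symm
    have h4 := congrArg (fun t => ((1:ℂ)/2) • t) h3
    simp only [smul_smul, smul_neg] at h4
    norm_num at h4
    rw [h4]
    module
  refine ⟨?_, ux⟩
  rw [ux] at star
  linear_combination (norm := module) -star
end
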